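/- arXiv:2212.04822 — 8 statements merged into one kernel-verified Lean document; each statement's English description precedes it below -/
import Mathlib

section
/- For all circle diffeomorphisms χ, φ, ψ, the Bott–Virasoro expression satisfies the group 2-cocycle identity c_BV(χ, φ) + c_BV(χ∘φ, ψ) = c_BV(χ, φ∘ψ) + c_BV(φ, ψ). -/
open Real

/-- A circle diffeomorphism: a smooth map `χ : ℝ → ℝ` with `χ (x + 2π) = χ x + 2π`
and `χ' x > 0` for all `x`. -/
def IsCircleDiffeo (χ : ℝ → ℝ) : Prop :=
  ContDiff ℝ (⊤ : ℕ∞) χ ∧ (∀ x, χ (x + 2 * Real.pi) = χ x + 2 * Real.pi) ∧ ∀ x, 0 < deriv χ x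

/-- The Bott–Virasoro expression
`c_BV(χ, φ) = ∫₀^{2π} log(χ'(φ x)) · (φ''(x)/φ'(x)) dx`. -/
noncomputable def cBV (χ φ : ℝ → ℝ) : ℝ :=
  ∫ x in (0:ℝ)..(2 * Real.pi),
    Real.log (deriv χ (φ x)) * (deriv (deriv φ) x / deriv φ x)

namespace BVaux

variable {f g : ℝ → ℝ}

lemma diff (hf : IsCircleDiffeo f) : Differentiable ℝ f :=
  hf.1.differentiable (by simp)

lemma deriv_smooth (hf : IsCircleDiffeo f) :
    ContDiff ℝ ((⊤ : ℕ∞) : WithTop ℕ∞) (deriv f) := by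
  have h : ContDiff ℝ ((⊤ : ℕ∞) : WithTop ℕ∞) f := hf.1.of_le (by simp)
  exact (contDiff_infty_iff_deriv.mp h).2

lemma deriv_diff (hf : IsCircleDiffeo f) : Differentiable ℝ (deriv f) :=
  (deriv_smooth hf).differentiable (by simp)

lemma deriv_cont (hf : IsCircleDiffeo f) : Continuous (deriv f) :=
  (deriv_diff hf).continuous

lemma deriv2_cont (hf : IsCircleDiffeo f) : Continuous (deriv (deriv f)) :=
  (contDiff_infty_iff_deriv.mp (deriv_smooth hf)).2.continuous

lemma deriv_ne (hf : IsCircleDiffeo f) (x : ℝ) : deriv f x ≠ 0 :=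
  (hf.2.2 x).ne'

/-- derivative of a "periodic-plus-constant" map is periodic -/
lemma deriv_shift {c : ℝ} (h : ∀ x, f (x + 2 * Real.pi) = f x + c) (x : ℝ) :
    deriv f (x + 2 * Real.pi) = deriv f x := by
  have h1 : deriv (fun y => f (y + 2 * Real.pi)) x = deriv f (x + 2 * Real.pi) :=
    deriv_comp_add_const f (2 * Real.pi) x
  have h2 : (fun y => f (y + 2 * Real.pi)) = fun y => f y + c := funext h
  rw [← h1, h2, deriv_add_const]

lemma deriv_periodic (hf : IsCircleDiffeo f) : Function.Periodic (deriv f) (2 * Real.pi) :=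
  fun x => deriv_shift hf.2.1 x

lemma deriv2_periodic (hf : IsCircleDiffeo f) :
    Function.Periodic (deriv (deriv f)) (2 * Real.pi) :=
  fun x => deriv_shift (c := 0) (fun y => by rw [deriv_periodic hf y, add_zero]) x

lemma lam_hasDerivAt (hf : IsCircleDiffeo f) (x : ℝ) :
    HasDerivAt (fun y => Real.log (deriv f y)) (deriv (deriv f) x / deriv f x) x :=
  ((deriv_diff hf x).hasDerivAt).log (deriv_ne hf x)

lemma comp_deriv (hf : IsCircleDiffeo f) (hg : IsCircleDiffeo g) (x : ℝ) :
    deriv (f ∘ g) x = deriv f (g x) * deriv g x :=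
  deriv_comp x (diff hf _) (diff hg _)

lemma comp_circleDiffeo (hf : IsCircleDiffeo f) (hg : IsCircleDiffeo g) :
    IsCircleDiffeo (f ∘ g) := by
  refine ⟨hf.1.comp hg.1, fun x => ?_, fun x => ?_⟩
  · simp only [Function.comp_apply, hg.2.1 x, hf.2.1 (g x)]
  · rw [comp_deriv hf hg]
    exact mul_pos (hf.2.2 _) (hg.2.2 _)

/-- The cBV integrand, as a function. -/
noncomputable def G (f g : ℝ → ℝ) (x : ℝ) : ℝ :=
  Real.log (deriv f (g x)) * (deriv (deriv g) x / deriv g x)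

lemma G_cont (hf : IsCircleDiffeo f) (hg : IsCircleDiffeo g) : Continuous (G f g) := by
  apply Continuous.mul
  · exact Continuous.log ((deriv_cont hf).comp (diff hg).continuous)
      (fun x => deriv_ne hf (g x))
  · exact (deriv2_cont hg).div (deriv_cont hg) (deriv_ne hg)

lemma G_periodic (hf : IsCircleDiffeo f) (hg : IsCircleDiffeo g) :
    Function.Periodic (G f g) (2 * Real.pi) := by
  intro x
  unfold G
  rw [hg.2.1 x, deriv_periodic hf, deriv_periodic hg, deriv2_periodic hg]

lemma cBV_eq (f g : ℝ → ℝ) : cBV f g = ∫ x in (0:ℝ)..(2 * Real.pi), G f g x := rfl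

/-- Substitution: ∫₀^{2π} ψ'(x) • (G f g)(h x) dx = cBV f g for circle diffeos. -/
lemma subst (hf : IsCircleDiffeo f) (hg : IsCircleDiffeo g) {h : ℝ → ℝ}
    (hh : IsCircleDiffeo h) :
    ∫ x in (0:ℝ)..(2 * Real.pi), deriv h x • G f g (h x) = cBV f g := by
  have key : ∫ x in (0:ℝ)..(2 * Real.pi), deriv h x • (G f g ∘ h) x
      = ∫ u in (h 0)..(h (2 * Real.pi)), G f g u := by
    apply intervalIntegral.integral_comp_smul_deriv
    · intro x _; exact (diff hh x).hasDerivAt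
    · exact (deriv_cont hh).continuousOn
    · exact G_cont hf hg
  simp only [Function.comp_apply] at key
  have h2 : h (2 * Real.pi) = h 0 + 2 * Real.pi := by
    have := hh.2.1 0; simpa using this
  rw [cBV_eq]
  calc ∫ x in (0:ℝ)..(2 * Real.pi), deriv h x • G f g (h x)
      = ∫ u in (h 0)..(h 0 + 2 * Real.pi), G f g u := by rw [← h2]; exact key
    _ = ∫ u in (0:ℝ)..(0 + 2 * Real.pi), G f g u :=
        (G_periodic hf hg).intervalIntegral_add_eq (h 0) 0
    _ = ∫ u in (0:ℝ)..(2 * Real.pi), G f g u := by rw [zero_add]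

end BVaux

open BVaux

theorem bott_virasoro_cocycle (χ φ ψ : ℝ → ℝ)
    (hχ : IsCircleDiffeo χ) (hφ : IsCircleDiffeo φ) (hψ : IsCircleDiffeo ψ) :
    cBV χ φ + cBV (χ ∘ φ) ψ = cBV χ (φ ∘ ψ) + cBV φ ψ := by
  have hφψ : IsCircleDiffeo (φ ∘ ψ) := comp_circleDiffeo hφ hψ
  -- the common extra term K x = log χ'(φ(ψ x)) * (ψ''/ψ')
  set K : ℝ → ℝ := fun x => Real.log (deriv χ (φ (ψ x))) * (deriv (deriv ψ) x / deriv ψ x)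
    with hK
  -- the substituted term S x = ψ' x • (G χ φ)(ψ x)
  set S : ℝ → ℝ := fun x => deriv ψ x • G χ φ (ψ x) with hS
  have hKcont : Continuous K := by
    apply Continuous.mul
    · exact Continuous.log
        ((deriv_cont hχ).comp ((diff hφ).continuous.comp (diff hψ).continuous))
        (fun x => deriv_ne hχ _)
    · exact (deriv2_cont hψ).div (deriv_cont hψ) (deriv_ne hψ)
  have hScont : Continuous S :=
    (deriv_cont hψ).smul ((G_cont hχ hφ).comp (diff hψ).continuous)
  have hKint : IntervalIntegrable K MeasureTheory.volume 0 (2 * Real.pi) :=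
    hKcont.intervalIntegrable _ _
  have hSint : IntervalIntegrable S MeasureTheory.volume 0 (2 * Real.pi) :=
    hScont.intervalIntegrable _ _
  -- cBV (χ∘φ) ψ = ∫ K + cBV φ ψ
  have e1 : cBV (χ ∘ φ) ψ = (∫ x in (0:ℝ)..(2 * Real.pi), K x) + cBV φ ψ := by
    rw [cBV_eq (χ ∘ φ) ψ, cBV_eq φ ψ, ← intervalIntegral.integral_add hKint
      ((G_cont hφ hψ).intervalIntegrable _ _)]
    apply intervalIntegral.integral_congr
    intro x _
    show G (χ ∘ φ) ψ x = K x + G φ ψ x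
    unfold G
    rw [comp_deriv hχ hφ, Real.log_mul (deriv_ne hχ _) (deriv_ne hφ _), add_mul]
  -- cBV χ (φ∘ψ) = ∫ S + ∫ K
  have e2 : cBV χ (φ ∘ ψ) = (∫ x in (0:ℝ)..(2 * Real.pi), S x)
      + (∫ x in (0:ℝ)..(2 * Real.pi), K x) := by
    rw [cBV_eq χ (φ ∘ ψ), ← intervalIntegral.integral_add hSint hKint]
    apply intervalIntegral.integral_congr
    intro x _
    have hlog : ∀ y, Real.log (deriv (φ ∘ ψ) y)
        = Real.log (deriv φ (ψ y)) + Real.log (deriv ψ y) := by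
      intro y
      rw [comp_deriv hφ hψ, Real.log_mul (deriv_ne hφ _) (deriv_ne hψ _)]
    have hd1 : HasDerivAt (fun y => Real.log (deriv φ (ψ y)))
        ((deriv (deriv φ) (ψ x) / deriv φ (ψ x)) * deriv ψ x) x :=
      (lam_hasDerivAt hφ (ψ x)).comp x ((diff hψ x).hasDerivAt)
    have hd2 : HasDerivAt (fun y => Real.log (deriv (φ ∘ ψ) y))
        ((deriv (deriv φ) (ψ x) / deriv φ (ψ x)) * deriv ψ x
          + deriv (deriv ψ) x / deriv ψ x) x := by
      have := hd1.add (lam_hasDerivAt hψ x)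
      apply this.congr_of_eventuallyEq
      filter_upwards with y using (hlog y)
    have hratio : deriv (deriv (φ ∘ ψ)) x / deriv (φ ∘ ψ) x
        = (deriv (deriv φ) (ψ x) / deriv φ (ψ x)) * deriv ψ x
          + deriv (deriv ψ) x / deriv ψ x := by
      exact (lam_hasDerivAt hφψ x).unique hd2
    show Real.log (deriv χ ((φ ∘ ψ) x)) * (deriv (deriv (φ ∘ ψ)) x / deriv (φ ∘ ψ) x)
      = S x + K x
    rw [hratio, mul_add]
    simp only [hS, hK, G, Function.comp_apply, smul_eq_mul]
    ring
  -- ∫ S = cBV χ φ by substitution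
  have e3 : (∫ x in (0:ℝ)..(2 * Real.pi), S x) = cBV χ φ := subst hχ hφ hψ
  rw [e1, e2, e3]
  ring
end

section
/- Let φ and ψ be circle diffeomorphisms with ψ(φ(x)) = x for all x ∈ ℝ. Then c_BV(ψ, φ) = 0. Moreover, for circle diffeomorphisms χ, φ, ψ satisfying χ(φ(ψ(x))) = x for all x ∈ ℝ, one has the cyclic property c_BV(χ, φ) = c_BV(φ, ψ) and c_BV(φ, ψ) = c_BV(ψ, χ). -/
open Real

namespace BVaux

lemma deriv_contDiff {f : ℝ → ℝ} (hf : ContDiff ℝ (⊤ : ℕ∞) f) : ContDiff ℝ (⊤ : ℕ∞) (deriv f) := by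
  rw [show ((⊤ : ℕ∞) : WithTop ℕ∞) = ((⊤ : ℕ∞) : WithTop ℕ∞) + 1 from rfl] at hf
  exact (contDiff_succ_iff_deriv.mp hf).2.2

lemma hasDerivAt' {φ : ℝ → ℝ} (hφ : IsCircleDiffeo φ) (x : ℝ) :
    HasDerivAt φ (deriv φ x) x :=
  (hφ.1.differentiable (by simp) x).hasDerivAt

lemma hasDerivAt2 {φ : ℝ → ℝ} (hφ : IsCircleDiffeo φ) (x : ℝ) :
    HasDerivAt (deriv φ) (deriv (deriv φ) x) x :=
  ((deriv_contDiff hφ.1).differentiable (by simp) x).hasDerivAt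

lemma periodic_deriv' {f : ℝ → ℝ} (hf : Function.Periodic f (2 * Real.pi)) :
    Function.Periodic (deriv f) (2 * Real.pi) := by
  intro x
  have h1 : (fun y => f (y + 2 * Real.pi)) = f := funext hf
  calc deriv f (x + 2 * Real.pi) = deriv (fun y => f (y + 2 * Real.pi)) x := by
        rw [deriv_comp_add_const]
    _ = deriv f x := by rw [h1]

lemma periodic_deriv {φ : ℝ → ℝ} (hφ : IsCircleDiffeo φ) :
    Function.Periodic (deriv φ) (2 * Real.pi) := by
  intro x
  have h1 : (fun y => φ (y + 2 * Real.pi)) = fun y => φ y + 2 * Real.pi :=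
    funext hφ.2.1
  calc deriv φ (x + 2 * Real.pi) = deriv (fun y => φ (y + 2 * Real.pi)) x := by
        rw [deriv_comp_add_const]
    _ = deriv (fun y => φ y + 2 * Real.pi) x := by rw [h1]
    _ = deriv φ x := deriv_add_const _

lemma periodic_deriv2 {φ : ℝ → ℝ} (hφ : IsCircleDiffeo φ) :
    Function.Periodic (deriv (deriv φ)) (2 * Real.pi) :=
  periodic_deriv' (periodic_deriv hφ)

lemma cont_log_deriv_comp {φ ψ : ℝ → ℝ} (hφ : IsCircleDiffeo φ) (hψc : Continuous ψ) :
    Continuous fun x => Real.log (deriv φ (ψ x)) := by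
  exact ((deriv_contDiff hφ.1).continuous.comp hψc).log
    fun x => (hφ.2.2 (ψ x)).ne'

/-- The key lemma: if `χ ∘ φ ∘ ψ = id` then `cBV χ φ = cBV φ ψ`. -/
lemma key {χ φ ψ : ℝ → ℝ} (hχ : IsCircleDiffeo χ) (hφ : IsCircleDiffeo φ)
    (hψ : IsCircleDiffeo ψ) (hrel : ∀ x, χ (φ (ψ x)) = x) : cBV χ φ = cBV φ ψ := by
  -- continuity facts
  have hφc : Continuous φ := hφ.1.continuous
  have hψc : Continuous ψ := hψ.1.continuous
  have hdφ : Continuous (deriv φ) := (deriv_contDiff hφ.1).continuous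
  have hdψ : Continuous (deriv ψ) := (deriv_contDiff hψ.1).continuous
  have hd2φ : Continuous (deriv (deriv φ)) := (deriv_contDiff (deriv_contDiff hφ.1)).continuous
  have hd2ψ : Continuous (deriv (deriv ψ)) := (deriv_contDiff (deriv_contDiff hψ.1)).continuous
  -- names for the relevant functions
  set A : ℝ → ℝ := fun y => Real.log (deriv φ (ψ y)) with hAdef
  set B : ℝ → ℝ := fun y => Real.log (deriv ψ y) with hBdef
  set dA : ℝ → ℝ := fun y => deriv (deriv φ) (ψ y) / deriv φ (ψ y) * deriv ψ y with hdAdef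
  set dB : ℝ → ℝ := fun y => deriv (deriv ψ) y / deriv ψ y with hdBdef
  have hA : ∀ y, HasDerivAt A (dA y) y := by
    intro y
    have h1 : HasDerivAt (fun t => Real.log (deriv φ t))
        (deriv (deriv φ) (ψ y) / deriv φ (ψ y)) (ψ y) :=
      (hasDerivAt2 hφ (ψ y)).log (hφ.2.2 (ψ y)).ne'
    exact h1.comp y (hasDerivAt' hψ y)
  have hB : ∀ y, HasDerivAt B (dB y) y := fun y =>
    (hasDerivAt2 hψ y).log (hψ.2.2 y).ne'
  have hAc : Continuous A := cont_log_deriv_comp hφ hψc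
  have hBc : Continuous B := cont_log_deriv_comp hψ continuous_id
  have hdAc : Continuous dA :=
    (((hd2φ.comp hψc).div (hdφ.comp hψc) fun x => (hφ.2.2 (ψ x)).ne')).mul hdψ
  have hdBc : Continuous dB := hd2ψ.div hdψ fun x => (hψ.2.2 x).ne'
  -- the chain-rule identity coming from χ ∘ φ ∘ ψ = id
  have hmul : ∀ y, deriv χ (φ (ψ y)) * (deriv φ (ψ y) * deriv ψ y) = 1 := by
    intro y
    have h1 : HasDerivAt (χ ∘ φ ∘ ψ)
        (deriv χ (φ (ψ y)) * (deriv φ (ψ y) * deriv ψ y)) y :=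
      (hasDerivAt' hχ (φ (ψ y))).comp y ((hasDerivAt' hφ (ψ y)).comp y (hasDerivAt' hψ y))
    have h2 : (χ ∘ φ ∘ ψ) = id := funext hrel
    rw [h2] at h1
    exact h1.unique (hasDerivAt_id y)
  have hlog : ∀ y, Real.log (deriv χ (φ (ψ y))) = -(A y + B y) := by
    intro y
    have hb := (hφ.2.2 (ψ y)).ne'
    have hc := (hψ.2.2 y).ne'
    have ha := (hχ.2.2 (φ (ψ y))).ne'
    have h0 : Real.log (deriv χ (φ (ψ y)) * (deriv φ (ψ y) * deriv ψ y)) = 0 := by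
      rw [hmul y, Real.log_one]
    rw [Real.log_mul ha (mul_ne_zero hb hc), Real.log_mul hb hc] at h0
    simp only [hAdef, hBdef]
    linarith
  -- periodicity of the integrand of `cBV χ φ`
  have hfper : Function.Periodic
      (fun x => Real.log (deriv χ (φ x)) * (deriv (deriv φ) x / deriv φ x))
      (2 * Real.pi) := by
    intro x
    simp only
    rw [hφ.2.1 x, periodic_deriv hχ (φ x), periodic_deriv2 hφ x, periodic_deriv hφ x]
  have hg : Continuous fun x =>
      Real.log (deriv χ (φ x)) * (deriv (deriv φ) x / deriv φ x) :=
    (cont_log_deriv_comp hχ hφc).mul (hd2φ.div hdφ fun x => (hφ.2.2 x).ne')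
  -- step 1: shift the integration interval using periodicity
  have step1 : cBV χ φ = ∫ x in (ψ 0)..(ψ (2 * Real.pi)),
      Real.log (deriv χ (φ x)) * (deriv (deriv φ) x / deriv φ x) := by
    have h1 := hfper.intervalIntegral_add_eq 0 (ψ 0)
    rw [zero_add] at h1
    have h2 : ψ 0 + 2 * Real.pi = ψ (2 * Real.pi) := by
      have := hψ.2.1 0
      rw [zero_add] at this
      exact this.symm
    rw [h2] at h1
    exact h1
  -- step 2: change of variables x = ψ y
  have step2 : (∫ x in (ψ 0)..(ψ (2 * Real.pi)),
      Real.log (deriv χ (φ x)) * (deriv (deriv φ) x / deriv φ x))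
      = ∫ y in (0:ℝ)..(2 * Real.pi), deriv ψ y •
        ((fun x => Real.log (deriv χ (φ x)) * (deriv (deriv φ) x / deriv φ x)) ∘ ψ) y :=
    (intervalIntegral.integral_comp_smul_deriv (fun x _ => hasDerivAt' hψ x)
      hdψ.continuousOn hg).symm
  -- step 3: rewrite the integrand
  have step3 : (∫ y in (0:ℝ)..(2 * Real.pi), deriv ψ y •
        ((fun x => Real.log (deriv χ (φ x)) * (deriv (deriv φ) x / deriv φ x)) ∘ ψ) y)
      = ∫ y in (0:ℝ)..(2 * Real.pi), (-(A y * dA y) - B y * dA y) := by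
    apply intervalIntegral.integral_congr
    intro y _
    simp only [Function.comp_apply, smul_eq_mul]
    rw [hlog y, hdAdef, hAdef, hBdef]
    ring
  -- periodicity of A and B over the interval
  have hA20 : A (2 * Real.pi) = A 0 := by
    show Real.log (deriv φ (ψ (2 * Real.pi))) = Real.log (deriv φ (ψ 0))
    rw [← zero_add (2 * Real.pi), hψ.2.1 0, periodic_deriv hφ (ψ 0)]
  have hB20 : B (2 * Real.pi) = B 0 := by
    show Real.log (deriv ψ (2 * Real.pi)) = Real.log (deriv ψ 0)
    rw [← zero_add (2 * Real.pi), periodic_deriv hψ 0]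
  -- ∫ A·A' = 0
  have hAA' : (∫ y in (0:ℝ)..(2 * Real.pi), A y * dA y) = 0 := by
    have hF : ∀ y ∈ Set.uIcc (0:ℝ) (2 * Real.pi),
        HasDerivAt (fun t => A t * A t / 2) (A y * dA y) y := by
      intro y _
      have h : HasDerivAt (fun t => A t * A t / 2) ((dA y * A y + A y * dA y) / 2) y :=
        ((hA y).mul (hA y)).div_const 2
      convert h using 1
      ring
    rw [intervalIntegral.integral_eq_sub_of_hasDerivAt hF
      ((hAc.mul hdAc).intervalIntegrable _ _)]
    rw [hA20]
    ring
  -- integration by parts for ∫ B·A'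
  have hparts := intervalIntegral.integral_mul_deriv_eq_deriv_mul
    (a := (0:ℝ)) (b := 2 * Real.pi) (u := B) (v := A) (u' := dB) (v' := dA)
    (fun y _ => hB y) (fun y _ => hA y)
    (hdBc.intervalIntegrable _ _) (hdAc.intervalIntegrable _ _)
  rw [hA20, hB20] at hparts
  -- assemble
  have split : (∫ y in (0:ℝ)..(2 * Real.pi), (-(A y * dA y) - B y * dA y))
      = -(∫ y in (0:ℝ)..(2 * Real.pi), A y * dA y)
        - ∫ y in (0:ℝ)..(2 * Real.pi), B y * dA y := by
    rw [intervalIntegral.integral_sub (f := fun y => -(A y * dA y)) (g := fun y => B y * dA y) ((hAc.mul hdAc).neg.intervalIntegrable _ _)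
      ((hBc.mul hdAc).intervalIntegrable _ _), intervalIntegral.integral_neg]
  have hfinal : cBV χ φ = ∫ y in (0:ℝ)..(2 * Real.pi), dB y * A y := by
    rw [step1, step2, step3, split, hAA', hparts]
    ring
  rw [hfinal, cBV]
  apply intervalIntegral.integral_congr
  intro y _
  simp only [hdBdef, hAdef]
  ring

/-- The identity is a circle diffeomorphism. -/
lemma id_diffeo : IsCircleDiffeo (fun x : ℝ => x) := by
  refine ⟨contDiff_id, fun x => rfl, fun x => ?_⟩
  simp

lemma cBV_id (φ : ℝ → ℝ) : cBV φ (fun x : ℝ => x) = 0 := by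
  rw [cBV]
  have h1 : deriv (fun x : ℝ => x) = fun _ => (1:ℝ) := by
    funext x; simp
  have h2 : deriv (deriv (fun x : ℝ => x)) = fun _ => (0:ℝ) := by
    rw [h1]; funext x; simp
  simp [h1, h2]

end BVaux

theorem bott_virasoro_cyclic :
    (∀ φ ψ : ℝ → ℝ, IsCircleDiffeo φ → IsCircleDiffeo ψ →
      (∀ x, ψ (φ x) = x) → cBV ψ φ = 0) ∧
    (∀ χ φ ψ : ℝ → ℝ, IsCircleDiffeo χ → IsCircleDiffeo φ → IsCircleDiffeo ψ →
      (∀ x, χ (φ (ψ x)) = x) → cBV χ φ = cBV φ ψ ∧ cBV φ ψ = cBV ψ χ) := by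
  constructor
  · intro φ ψ hφ hψ hrel
    have h := BVaux.key hψ hφ BVaux.id_diffeo (fun x => hrel x)
    rw [h, BVaux.cBV_id]
  · intro χ φ ψ hχ hφ hψ hrel
    have h1 : cBV χ φ = cBV φ ψ := BVaux.key hχ hφ hψ hrel
    have hrel2 : ∀ x, φ (ψ (χ x)) = x := by
      intro x
      have hmono : StrictMono χ := strictMono_of_deriv_pos hχ.2.2
      exact hmono.injective (hrel (χ x))
    have h2 : cBV φ ψ = cBV ψ χ := BVaux.key hφ hψ hχ hrel2
    exact ⟨h1, h2⟩
end

section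
/- Let r < 1 < R and r' < 1 < R', let f be holomorphic on the annulus A_{r,R} with f(A_{r,R}) ⊆ A_{r',R'}, and assume the loop x ↦ f(e^{ix}) has winding number one around the origin, i.e. (1/(2πi)) ∫₀^{2π} (f'(e^{ix}) · i e^{ix} / f(e^{ix})) dx = 1. Then for all holomorphic functions ψ₁, ψ₂ on A_{r',R'}: ∫₀^{2π} ψ₁(f(e^{ix})) · ψ₂'(f(e^{ix})) · f'(e^{ix}) · i e^{ix} dx = ∫₀^{2π} ψ₁(e^{ix}) · ψ₂'(e^{ix}) · i e^{ix} dx. (This expresses that the symplectic form ω on holomorphic functions, given by the contour integral of (δφ) ∂_z(δφ) dz over a curve generating π₁ of the annulus, is preserved under pullback by f.) -/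
/-!
Put `g = ψ₁ * deriv ψ₂`; both sides are integrals of `g dz` along closed curves in the target
annulus `A` winding once around `0`. Pulled back by `exp`, `g dz` becomes `G u du` with
`G u = g (exp u) * exp u`, holomorphic and `2πi`-periodic on the vertical strip `exp ⁻¹' A`. Being a
product of intervals, the strip carries a primitive `H` of `G` (wedge integrals from a base point),
and lifting a curve `γ` through `exp` by integrating `γ' / γ` turns its integral into
`H (u + 2πi) - H u`. This difference does not depend on `u`, as its derivative
`G (u + 2πi) - G u` vanishes. If `r' < 0`, the annulus is a disc and both integrals vanish.
-/

open Complex intervalIntegral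

/-- The open annulus `A_{r,R} = {z : r < |z| < R}`. -/
def annulus (r R : ℝ) : Set ℂ := {z : ℂ | r < ‖z‖ ∧ ‖z‖ < R}

open Set MeasureTheory

namespace Complex

variable {E : Type*} [NormedAddCommGroup E] {f : ℂ → E} {s t : Set ℝ}

lemma rectangle_subset_reProdIm (hs : s.OrdConnected) (ht : t.OrdConnected) {z w : ℂ}
    (hz : z ∈ s ×ℂ t) (hw : w ∈ s ×ℂ t) : Rectangle z w ⊆ s ×ℂ t :=
  reProdIm_subset_iff.2 <| prod_mono (hs.uIcc_subset hz.1 hw.1) (ht.uIcc_subset hz.2 hw.2)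

lemma _root_.Convex.reProdIm (hs : Convex ℝ s) (ht : Convex ℝ t) : Convex ℝ (s ×ℂ t) := by
  simpa only [convexHull_reProdIm, hs.convexHull_eq, ht.convexHull_eq] using
    convex_convexHull ℝ (s ×ℂ t)

lemma _root_.ContinuousOn.intervalIntegrable_horizontal (hf : ContinuousOn f (s ×ℂ t))
    (hs : s.OrdConnected) {a a' b : ℝ} (ha : a ∈ s) (ha' : a' ∈ s) (hb : b ∈ t) :
    IntervalIntegrable (fun x : ℝ ↦ f (x + b * I)) volume a a' :=
  (hf.comp (by fun_prop) fun x hx ↦ by simpa [mem_reProdIm, hb] using hs.uIcc_subset ha ha' hx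
    ).intervalIntegrable

lemma _root_.ContinuousOn.intervalIntegrable_vertical (hf : ContinuousOn f (s ×ℂ t))
    (ht : t.OrdConnected) {a b b' : ℝ} (ha : a ∈ s) (hb : b ∈ t) (hb' : b' ∈ t) :
    IntervalIntegrable (fun y : ℝ ↦ f (a + y * I)) volume b b' :=
  (hf.comp (by fun_prop) fun y hy ↦ by simpa [mem_reProdIm, ha] using ht.uIcc_subset hb hb' hy
    ).intervalIntegrable

variable [NormedSpace ℂ E]

/-- The two wedge integrals differ by the boundary integral over the rectangle with corners
`z.re + c.im * I` and `w.re + z.im * I`, which vanishes. -/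
lemma wedgeIntegral_sub_wedgeIntegral_of_reProdIm (hs : s.OrdConnected) (ht : t.OrdConnected)
    (hf : DifferentiableOn ℂ f (s ×ℂ t)) {c z w : ℂ} (hc : c ∈ s ×ℂ t) (hz : z ∈ s ×ℂ t)
    (hw : w ∈ s ×ℂ t) :
    wedgeIntegral c w f - wedgeIntegral c z f = wedgeIntegral z w f := by
  have hfc := hf.continuousOn
  have hrect := integral_boundary_rect_eq_zero_of_differentiableOn f (z.re + c.im * I)
    (w.re + z.im * I) <| hf.mono <| rectangle_subset_reProdIm hs ht
      (by simpa [mem_reProdIm] using ⟨hz.1, hc.2⟩) (by simpa [mem_reProdIm] using ⟨hw.1, hz.2⟩)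
  simp only [add_re, ofReal_re, mul_re, I_re, mul_zero, ofReal_im, I_im, mul_one, sub_self,
    add_zero, add_im, mul_im, zero_add] at hrect
  rw [wedgeIntegral, wedgeIntegral, wedgeIntegral,
    ← integral_add_adjacent_intervals (hfc.intervalIntegrable_horizontal hs hc.1 hz.1 hc.2)
      (hfc.intervalIntegrable_horizontal hs hz.1 hw.1 hc.2),
    ← integral_add_adjacent_intervals (hfc.intervalIntegrable_vertical ht hw.1 hc.2 hz.2)
      (hfc.intervalIntegrable_vertical ht hw.1 hz.2 hw.2), smul_add]
  linear_combination (norm := module) hrect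

/-- Near `z`, `w ↦ wedgeIntegral c w f` differs by a constant from the local primitive
`w ↦ wedgeIntegral z w f` on a ball around `z`. -/
theorem _root_.DifferentiableOn.isExactOn_reProdIm [CompleteSpace E] (hs : s.OrdConnected)
    (ht : t.OrdConnected) (hso : IsOpen s) (hto : IsOpen t) (hf : DifferentiableOn ℂ f (s ×ℂ t)) :
    IsExactOn f (s ×ℂ t) := by
  rcases (s ×ℂ t).eq_empty_or_nonempty with hU | ⟨c, hc⟩
  · exact ⟨0, by simp [hU]⟩
  refine ⟨fun w ↦ wedgeIntegral c w f, fun z hz ↦ ?_⟩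
  obtain ⟨ρ, hρ, hball⟩ := Metric.isOpen_iff.1 (hso.reProdIm hto) z hz
  have hloc : HasDerivAt (fun w ↦ wedgeIntegral z w f) (f z) z :=
    (hf.mono hball).isConservativeOn.hasDerivAt_wedgeIntegral (hf.continuousOn.mono hball)
      (Metric.mem_ball_self hρ)
  refine (hloc.const_add (wedgeIntegral c z f)).congr_of_eventuallyEq ?_
  filter_upwards [Metric.ball_mem_nhds z hρ] with w hw
  rw [← wedgeIntegral_sub_wedgeIntegral_of_reProdIm hs ht hf hc hz (hball hw), add_sub_cancel]

theorem integral_comp_mul_deriv_eq_sub {U : Set ℂ} {F g : ℂ → ℂ}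
    (hF : ∀ z ∈ U, HasDerivAt F (g z) z) (hg : ContinuousOn g U) {γ γ' : ℝ → ℂ}
    (hγ : ∀ x, HasDerivAt γ (γ' x) x) (hγ' : Continuous γ') (hγU : ∀ x, γ x ∈ U) (a b : ℝ) :
    ∫ x in a..b, g (γ x) * γ' x = F (γ b) - F (γ a) :=
  integral_eq_sub_of_hasDerivAt (fun x _ ↦ (hF _ (hγU x)).comp x (hγ x))
    (((hg.comp_continuous (continuous_iff_continuousAt.2 fun x ↦ (hγ x).continuousAt) hγU).mul
      hγ' : Continuous fun x ↦ g (γ x) * γ' x).intervalIntegrable a b)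

theorem exp_eq_of_hasDerivAt_div {γ γ' L : ℝ → ℂ} (hγ : ∀ x, HasDerivAt γ (γ' x) x)
    (hL : ∀ x, HasDerivAt L (γ' x / γ x) x) (hγ0 : ∀ x, γ x ≠ 0) {a : ℝ}
    (ha : exp (L a) = γ a) (x : ℝ) : exp (L x) = γ x := by
  have hconst : ∀ y, HasDerivAt (fun y ↦ exp (-L y) * γ y) 0 y := fun y ↦ by
    refine (((hL y).neg.cexp).mul (hγ y)).congr_deriv ?_
    field_simp [hγ0 y]
    ring
  have := is_const_of_deriv_eq_zero (fun y ↦ (hconst y).differentiableAt)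
    (fun y ↦ (hconst y).deriv) x a
  rw [exp_neg, exp_neg, ha, inv_mul_cancel₀ (hγ0 a), inv_mul_eq_one₀ (exp_ne_zero _)] at this
  exact this

theorem integral_comp_mul_deriv_eq_of_integral_div_eq {A : Set ℂ} {g H : ℂ → ℂ}
    (hg : ContinuousOn g A) (hH : ∀ u ∈ exp ⁻¹' A, HasDerivAt H (g (exp u) * exp u) u)
    {γ γ' : ℝ → ℂ} (hγ : ∀ x, HasDerivAt γ (γ' x) x) (hγ' : Continuous γ')
    (hγA : ∀ x, γ x ∈ A) (hγ0 : ∀ x, γ x ≠ 0) {a b : ℝ} {w : ℂ}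
    (hw : ∫ x in a..b, γ' x / γ x = w) :
    ∫ x in a..b, g (γ x) * γ' x = H (log (γ a) + w) - H (log (γ a)) := by
  have hq : Continuous fun x ↦ γ' x / γ x :=
    hγ'.div (continuous_iff_continuousAt.2 fun x ↦ (hγ x).continuousAt) hγ0
  set L : ℝ → ℂ := fun x ↦ log (γ a) + ∫ t in a..x, γ' t / γ t
  have hL : ∀ x, HasDerivAt L (γ' x / γ x) x := fun x ↦
    ((hq.integral_hasStrictDerivAt a x).hasDerivAt).const_add _
  have hexpL : ∀ x, exp (L x) = γ x :=
    exp_eq_of_hasDerivAt_div hγ hL hγ0 (a := a) (by simp [L, exp_log (hγ0 a)])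
  have hG : ContinuousOn (fun u ↦ g (exp u) * exp u) (exp ⁻¹' A) :=
    (hg.comp continuous_exp.continuousOn fun _ hu ↦ hu).mul continuous_exp.continuousOn
  have := integral_comp_mul_deriv_eq_sub hH hG hL hq (fun x ↦ by simp [hexpL, hγA]) a b
  simp only [hexpL, integral_same, add_zero, hw, L] at this
  rw [← this]
  refine integral_congr fun x _ ↦ ?_
  field_simp [hγ0 x]

theorem sub_eq_sub_of_hasDerivAt_of_periodic {S : Set ℂ} (hSo : IsOpen S)
    (hSc : IsPreconnected S) {G H : ℂ → E}
    (hH : ∀ u ∈ S, HasDerivAt H (G u) u) {p : ℂ} (hSp : ∀ u ∈ S, u + p ∈ S)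
    (hG : ∀ u ∈ S, G (u + p) = G u) {u v : ℂ} (hu : u ∈ S) (hv : v ∈ S) :
    H (u + p) - H u = H (v + p) - H v := by
  have hD : ∀ z ∈ S, HasDerivAt (fun w ↦ H (w + p) - H w) 0 z := fun z hz ↦ by
    have := ((hH _ (hSp z hz)).comp_add_const z p).sub (hH z hz)
    rwa [hG z hz, sub_self] at this
  exact hSo.is_const_of_deriv_eq_zero hSc
    (fun z hz ↦ (hD z hz).differentiableAt.differentiableWithinAt) (fun z hz ↦ (hD z hz).deriv)
    hu hv

end Complex

lemma isOpen_annulus (r R : ℝ) : IsOpen (annulus r R) :=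
  isOpen_Ioo.preimage continuous_norm

lemma annulus_eq_ball {r : ℝ} (hr : r < 0) (R : ℝ) : annulus r R = Metric.ball 0 R := by
  ext z
  simp [annulus, hr.trans_le (norm_nonneg z)]

lemma preimage_exp_annulus (r R : ℝ) :
    exp ⁻¹' annulus r R = (Real.exp ⁻¹' Ioo r R) ×ℂ univ := by
  ext u
  simp [annulus, norm_exp, mem_reProdIm]

lemma exp_ofReal_mul_I_mem_annulus {r R : ℝ} (hr : r < 1) (hR : 1 < R) (x : ℝ) :
    exp (x * I) ∈ annulus r R := by
  simp [annulus, norm_exp_ofReal_mul_I, hr, hR]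

lemma hasDerivAt_exp_ofReal_mul_I (x : ℝ) :
    HasDerivAt (fun x : ℝ ↦ exp (x * I)) (I * exp (x * I)) x := by
  simpa [mul_comm] using ((hasDerivAt_id (x : ℂ)).mul_const I).cexp.comp_ofReal

theorem integral_comp_mul_deriv_eq_integral_circle {r R : ℝ} (hr₀ : 0 ≤ r) (hr : r < 1)
    (hR : 1 < R) {g : ℂ → ℂ} (hg : DifferentiableOn ℂ g (annulus r R)) {γ γ' : ℝ → ℂ}
    (hγ : ∀ x, HasDerivAt γ (γ' x) x) (hγ' : Continuous γ') (hγA : ∀ x, γ x ∈ annulus r R)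
    {a b : ℝ} (hwind : ∫ x in a..b, γ' x / γ x = 2 * Real.pi * I) :
    ∫ x in a..b, g (γ x) * γ' x =
      ∫ x in (0:ℝ)..(2 * Real.pi), g (exp (x * I)) * (I * exp (x * I)) := by
  set S := exp ⁻¹' annulus r R
  set s := Real.exp ⁻¹' Ioo r R
  have hS : S = s ×ℂ univ := preimage_exp_annulus r R
  have hs : s.OrdConnected := ordConnected_Ioo.preimage_mono Real.exp_monotone
  have hG : DifferentiableOn ℂ (fun u ↦ g (exp u) * exp u) (s ×ℂ univ) :=
    hS ▸ (hg.comp differentiable_exp.differentiableOn fun _ hu ↦ hu).mul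
      differentiable_exp.differentiableOn
  obtain ⟨H, hH⟩ := hG.isExactOn_reProdIm hs ordConnected_univ
    (isOpen_Ioo.preimage Real.continuous_exp) isOpen_univ
  rw [← hS] at hH
  have hγ0 : ∀ x, γ x ≠ 0 := fun x h0 ↦ by
    simpa [annulus, h0, not_lt.2 hr₀] using hγA x
  have hcircle :
      ∫ x in (0:ℝ)..(2 * Real.pi), I * exp (x * I) / exp (x * I) = 2 * Real.pi * I := by
    simp
  rw [integral_comp_mul_deriv_eq_of_integral_div_eq hg.continuousOn hH hγ hγ' hγA hγ0 hwind,
    integral_comp_mul_deriv_eq_of_integral_div_eq hg.continuousOn hH hasDerivAt_exp_ofReal_mul_I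
      (by fun_prop) (exp_ofReal_mul_I_mem_annulus hr hR) (fun _ ↦ exp_ne_zero _) hcircle]
  have hSo : IsOpen S := (isOpen_annulus r R).preimage continuous_exp
  have hSc : IsPreconnected S :=
    hS ▸ ((convex_iff_ordConnected.2 hs).reProdIm convex_univ).isPreconnected
  refine sub_eq_sub_of_hasDerivAt_of_periodic hSo hSc hH (fun u hu ↦ ?_) (fun u _ ↦ ?_)
    ?_ ?_
  · simpa [S, exp_periodic u] using hu
  · simp [exp_periodic u]
  · simpa [S, exp_log (hγ0 a)] using hγA a
  · simpa [S] using exp_ofReal_mul_I_mem_annulus hr hR 0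

theorem symplectic_form_preserved (r R r' R' : ℝ)
    (hr : r < 1) (hR : 1 < R) (hr' : r' < 1) (hR' : 1 < R')
    (f : ℂ → ℂ) (hf : DifferentiableOn ℂ f (annulus r R))
    (hmaps : ∀ z ∈ annulus r R, f z ∈ annulus r' R')
    (hwind : (1 / (2 * (Real.pi : ℂ) * Complex.I)) *
        (∫ x in (0:ℝ)..(2 * Real.pi),
          deriv f (Complex.exp (x * Complex.I)) * (Complex.I * Complex.exp (x * Complex.I)) /
            f (Complex.exp (x * Complex.I))) = 1) :
    ∀ ψ₁ ψ₂ : ℂ → ℂ, DifferentiableOn ℂ ψ₁ (annulus r' R') →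
      DifferentiableOn ℂ ψ₂ (annulus r' R') →
      (∫ x in (0:ℝ)..(2 * Real.pi),
          ψ₁ (f (Complex.exp (x * Complex.I))) *
            deriv ψ₂ (f (Complex.exp (x * Complex.I))) *
            deriv f (Complex.exp (x * Complex.I)) * (Complex.I * Complex.exp (x * Complex.I)))
      = ∫ x in (0:ℝ)..(2 * Real.pi),
          ψ₁ (Complex.exp (x * Complex.I)) * deriv ψ₂ (Complex.exp (x * Complex.I)) *
            (Complex.I * Complex.exp (x * Complex.I)) := by
  intro ψ₁ ψ₂ hψ₁ hψ₂
  have hg : DifferentiableOn ℂ (fun z ↦ ψ₁ z * deriv ψ₂ z) (annulus r' R') :=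
    hψ₁.mul (hψ₂.deriv (isOpen_annulus r' R'))
  have hcircle := exp_ofReal_mul_I_mem_annulus hr hR
  have hγ : ∀ x : ℝ, HasDerivAt (fun x : ℝ ↦ f (exp (x * I)))
      (deriv f (exp (x * I)) * (I * exp (x * I))) x := fun x ↦
    (hf.differentiableAt ((isOpen_annulus r R).mem_nhds (hcircle x))).hasDerivAt.comp x
      (hasDerivAt_exp_ofReal_mul_I x)
  have hγ' : Continuous fun x : ℝ ↦ deriv f (exp (x * I)) * (I * exp (x * I)) :=
    ((hf.deriv (isOpen_annulus r R)).continuousOn.comp_continuous (by fun_prop) hcircle).mul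
      (by fun_prop)
  have hγA : ∀ x : ℝ, f (exp (x * I)) ∈ annulus r' R' := fun x ↦ hmaps _ (hcircle x)
  simp_rw [mul_assoc _ (deriv f _)]
  rcases lt_or_ge r' 0 with hr'₀ | hr'₀
  · rw [annulus_eq_ball hr'₀] at hg hγA
    obtain ⟨F, hF⟩ := hg.isExactOn_ball
    have hexp : exp (↑(2 * Real.pi) * I) = exp (↑(0:ℝ) * I) := by simp
    rw [integral_comp_mul_deriv_eq_sub hF hg.continuousOn hγ hγ' hγA,
      integral_comp_mul_deriv_eq_sub hF hg.continuousOn hasDerivAt_exp_ofReal_mul_I (by fun_prop)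
        (fun x ↦ by simpa [annulus_eq_ball hr'₀] using exp_ofReal_mul_I_mem_annulus hr' hR' x),
      hexp, sub_self, sub_self]
  · refine integral_comp_mul_deriv_eq_integral_circle hr'₀ hr' hR' hg hγ hγ' hγA ?_
    rwa [one_div_mul_eq_div, div_eq_one_iff_eq (by simp [Real.pi_ne_zero])] at hwind
end

section
/- Let U ⊆ ℂ be open and let f be an injective holomorphic function on U. Then there exists a function F of two complex variables, holomorphic on U × U, such that F(u, w) = f'(u)·f'(w)/(f(u) − f(w))² − 1/(u − w)² for all u, w ∈ U with u ≠ w. (In particular, the Grunsky-type kernel f'(u)f'(w)/(f(u)−f(w))² − 1/(u−w)² extends holomorphically across the diagonal.) -/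
/-!
Put `g(u, w) = (f u - f w) / (u - w)`, extended by `f'` on the diagonal. Off the diagonal the
kernel is `∂ᵤ∂_w log g = (g ∂ᵤ∂_w g - ∂ᵤg ∂_w g) / g²`, and `∂ᵤg`, `∂_w g`, `∂ᵤ∂_w g` are the
divided differences `f[u,u,w]`, `f[u,w,w]`, `f[u,u,w,w]`. So it suffices that these four divided
differences are holomorphic on `U × U` and that `g` has no zeros there.

Off the diagonal both facts are clear (for `g ≠ 0` by injectivity). On the diagonal `g = f'`, and
an injective holomorphic function has no critical points: near a zero of `f'` of order `n - 1 ≥ 1`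
one has `f = f z₀ + ψⁿ` with `ψ` a local homeomorphism, and `ζ ↦ ζⁿ` is not injective near `0`.
Near the diagonal, on a convex neighbourhood, each divided difference is an integral
`∫₀¹ φ(t) f⁽ᵏ⁾(w + t(u - w)) dt` (Hermite–Genocchi; the formulas follow from one another by
integration by parts), and such integrals depend holomorphically on `(u, w)` by differentiation
under the integral sign.
-/

open Set Metric Filter Topology intervalIntegral
open scoped Interval

lemma exists_pow_eq_of_analyticAt {h : ℂ → ℂ} {z₀ : ℂ} (hh : AnalyticAt ℂ h z₀) (hz₀ : h z₀ ≠ 0)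
    {n : ℕ} (hn : n ≠ 0) : ∃ r : ℂ → ℂ, AnalyticAt ℂ r z₀ ∧ ∀ z, r z ^ n = h z := by
  -- normalising by `h z₀` keeps the argument of `cpow` near `1`, inside the slit plane
  refine ⟨fun z => h z₀ ^ (n⁻¹ : ℂ) * (h z / h z₀) ^ (n⁻¹ : ℂ), ?_, fun z => ?_⟩
  · refine analyticAt_const.mul ((hh.div analyticAt_const hz₀).cpow analyticAt_const ?_)
    simp [div_self hz₀]
  · rw [mul_pow, Complex.cpow_nat_inv_pow _ hn, Complex.cpow_nat_inv_pow _ hn,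
      mul_div_cancel₀ _ hz₀]

lemma not_injOn_pow_of_mem_nhds_zero {n : ℕ} (hn : 2 ≤ n) {s : Set ℂ} (hs : s ∈ 𝓝 0) :
    ¬ InjOn (· ^ n) s := by
  intro hinj
  obtain ⟨δ, hδ, hball⟩ := Metric.mem_nhds_iff.1 hs
  have hn0 : n ≠ 0 := by omega
  set ζ := Complex.exp (2 * Real.pi * Complex.I / n)
  have hζ : IsPrimitiveRoot ζ n := Complex.isPrimitiveRoot_exp n hn0
  have hnorm : ‖ζ‖ = 1 := hζ.norm'_eq_one hn0
  set ε : ℂ := ((δ / 2 : ℝ) : ℂ)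
  have hε : ‖ε‖ = δ / 2 := by simp [ε, abs_of_pos hδ]
  have hε0 : ε ≠ 0 := by rw [← norm_ne_zero_iff, hε]; positivity
  have hmem : ∀ z : ℂ, ‖z‖ = δ / 2 → z ∈ s := fun z hz =>
    hball (by rw [mem_ball_zero_iff, hz]; linarith)
  have heq : ε * ζ = ε := hinj (hmem _ (by rw [norm_mul, hnorm, mul_one, hε])) (hmem _ hε)
    (by simp only [mul_pow, hζ.pow_eq_one, mul_one])
  exact hζ.ne_one (by omega) (mul_eq_left₀ hε0 |>.1 heq)

lemma exists_eventually_eq_add_pow_of_deriv_eq_zero {f : ℂ → ℂ} {z₀ : ℂ}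
    (hf : AnalyticAt ℂ f z₀) (hd : deriv f z₀ = 0) (hnc : ¬ ∀ᶠ z in 𝓝 z₀, f z = f z₀) :
    ∃ n, 2 ≤ n ∧ ∃ ψ : ℂ → ℂ, map ψ (𝓝 z₀) = 𝓝 0 ∧ ∀ᶠ z in 𝓝 z₀, f z = f z₀ + ψ z ^ n := by
  obtain ⟨n, h, hh, hz₀, hfh⟩ :=
    (hf.fun_sub analyticAt_const).exists_eventuallyEq_pow_smul_nonzero_iff.2
      (by simpa [sub_eq_zero] using hnc)
  simp only [smul_eq_mul] at hfh
  have hn0 : n ≠ 0 := by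
    rintro rfl
    exact hz₀ (by simpa using hfh.self_of_nhds.symm)
  have hn1 : n ≠ 1 := by
    rintro rfl
    have hderiv : HasDerivAt (fun z => (z - z₀) ^ 1 * h z) (h z₀) z₀ := by
      simpa using ((hasDerivAt_id z₀).sub_const z₀).fun_mul hh.differentiableAt.hasDerivAt
    refine hz₀ ?_
    rw [← (hderiv.congr_of_eventuallyEq hfh).deriv, deriv_sub_const, hd]
  obtain ⟨r, hr, hrh⟩ := exists_pow_eq_of_analyticAt hh hz₀ hn0
  have hr₀ : r z₀ ≠ 0 := fun h0 => hz₀ (by rw [← hrh, h0, zero_pow hn0])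
  have hψ : HasStrictDerivAt (fun z => (z - z₀) * r z) (r z₀) z₀ := by
    simpa using ((hasStrictDerivAt_id z₀).fun_sub (hasStrictDerivAt_const z₀ z₀)).fun_mul
      hr.hasStrictDerivAt
  refine ⟨n, by omega, fun z => (z - z₀) * r z, by simpa using hψ.map_nhds_eq hr₀, ?_⟩
  filter_upwards [hfh] with z hz
  rw [mul_pow, hrh, ← hz, add_sub_cancel]

theorem deriv_ne_zero_of_injOn {U : Set ℂ} (hU : IsOpen U) {f : ℂ → ℂ}
    (hf : DifferentiableOn ℂ f U) (hinj : InjOn f U) {z₀ : ℂ} (hz₀ : z₀ ∈ U) :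
    deriv f z₀ ≠ 0 := by
  intro hd
  have hUz : U ∈ 𝓝 z₀ := hU.mem_nhds hz₀
  have hnc : ¬ ∀ᶠ z in 𝓝 z₀, f z = f z₀ := by
    intro hconst
    obtain ⟨z, ⟨hfz, hzU⟩, hne⟩ := (((hconst.and hUz).filter_mono nhdsWithin_le_nhds).and
      (self_mem_nhdsWithin (s := {z₀}ᶜ))).exists
    exact hne (hinj hzU hz₀ hfz)
  obtain ⟨n, hn, ψ, hψ, hfψ⟩ :=
    exists_eventually_eq_add_pow_of_deriv_eq_zero (hf.analyticOnNhd hU z₀ hz₀) hd hnc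
  obtain ⟨V, hV, hVf⟩ := (hfψ.and hUz).exists_mem
  refine not_injOn_pow_of_mem_nhds_zero hn (hψ ▸ image_mem_map hV) ?_
  rintro _ ⟨x, hx, rfl⟩ _ ⟨y, hy, rfl⟩ hxy
  have hfxy : f x = f y := by rw [(hVf x hx).1, (hVf y hy).1]; exact congrArg _ hxy
  rw [hinj (hVf x hx).2 (hVf y hy).2 hfxy]

theorem hasFDerivAt_intervalIntegral_of_continuousOn {𝕜 H E : Type*} [RCLike 𝕜]
    [NormedAddCommGroup H] [NormedSpace 𝕜 H] [ProperSpace H]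
    [NormedAddCommGroup E] [NormedSpace ℝ E] [NormedSpace 𝕜 E]
    {F : H → ℝ → E} {F' : H → ℝ → H →L[𝕜] E} {s : Set H} (hs : IsOpen s) {a b : ℝ} (hab : a ≤ b)
    (hF : ContinuousOn (Function.uncurry F) (s ×ˢ Icc a b))
    (hF' : ContinuousOn (Function.uncurry F') (s ×ˢ Icc a b))
    (hdiff : ∀ x ∈ s, ∀ t ∈ Icc a b, HasFDerivAt (F · t) (F' x t) x) {x₀ : H} (hx₀ : x₀ ∈ s) :
    HasFDerivAt (fun x => ∫ t in a..b, F x t) (∫ t in a..b, F' x₀ t) x₀ := by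
  obtain ⟨δ, hδ, hδs⟩ := nhds_basis_closedBall.mem_iff.1 (hs.mem_nhds hx₀)
  obtain ⟨C, hC⟩ := ((isCompact_closedBall x₀ δ).prod isCompact_Icc).exists_bound_of_continuousOn
    (hF'.mono (prod_mono hδs subset_rfl))
  have hIoc : Ι a b ⊆ Icc a b := by rw [uIoc_of_le hab]; exact Ioc_subset_Icc_self
  refine hasFDerivAt_integral_of_dominated_of_fderiv_le (bound := fun _ => C)
    (closedBall_mem_nhds x₀ hδ) ?_ ?_ ?_ ?_ intervalIntegrable_const ?_
  · filter_upwards [hs.mem_nhds hx₀] with x hx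
    exact ((hF.uncurry_left x hx).mono hIoc).aestronglyMeasurable measurableSet_uIoc
  · exact (hF.uncurry_left x₀ hx₀).intervalIntegrable_of_Icc hab
  · exact ((hF'.uncurry_left x₀ hx₀).mono hIoc).aestronglyMeasurable measurableSet_uIoc
  · exact MeasureTheory.ae_of_all _ fun t ht x hx => hC (x, t) ⟨hx, hIoc ht⟩
  · exact MeasureTheory.ae_of_all _ fun t ht x hx => hdiff x (hδs hx) t (hIoc ht)

noncomputable def segmentIntegral (φ : ℝ → ℝ) (G : ℂ → ℂ) (p : ℂ × ℂ) : ℂ :=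
  ∫ t in (0 : ℝ)..1, φ t • G (p.2 + t • (p.1 - p.2))

lemma segmentIntegral_self (φ : ℝ → ℝ) (G : ℂ → ℂ) (z : ℂ) :
    segmentIntegral φ G (z, z) = (∫ t in (0 : ℝ)..1, φ t) • G z := by
  simp only [segmentIntegral, sub_self, smul_zero, add_zero]
  exact intervalIntegral.integral_smul_const _ _

lemma mapsTo_add_smul_sub {U : Set ℂ} {u w : ℂ} (huw : segment ℝ w u ⊆ U) :
    MapsTo (fun t : ℝ => w + t • (u - w)) (Icc 0 1) U := fun _ ht =>
  huw (segment_eq_image' ℝ w u ▸ mem_image_of_mem _ ht)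

lemma segmentIntegral_sub {U : Set ℂ} {φ₁ φ₂ : ℝ → ℝ} (hφ₁ : Continuous φ₁)
    (hφ₂ : Continuous φ₂) {G : ℂ → ℂ} (hG : ContinuousOn G U) {u w : ℂ}
    (huw : segment ℝ w u ⊆ U) :
    segmentIntegral (φ₁ - φ₂) G (u, w) =
      segmentIntegral φ₁ G (u, w) - segmentIntegral φ₂ G (u, w) := by
  have hGseg : ContinuousOn (fun t : ℝ => G (w + t • (u - w))) [[0, 1]] :=
    hG.comp (by fun_prop) (by simpa using mapsTo_add_smul_sub huw)
  simp only [segmentIntegral, Pi.sub_apply, sub_smul]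
  exact integral_sub (hφ₁.continuousOn.smul hGseg).intervalIntegrable
    (hφ₂.continuousOn.smul hGseg).intervalIntegrable

theorem sub_mul_segmentIntegral_deriv {U : Set ℂ} (hU : IsOpen U) {G : ℂ → ℂ}
    (hG : DifferentiableOn ℂ G U) {φ φ' : ℝ → ℝ} (hφ : ∀ t, HasDerivAt φ (φ' t) t)
    (hφ' : Continuous φ') {u w : ℂ} (huw : segment ℝ w u ⊆ U) :
    (u - w) * segmentIntegral φ (deriv G) (u, w) =
      φ 1 • G u - φ 0 • G w - segmentIntegral φ' G (u, w) := by
  have hmem : MapsTo (fun t : ℝ => w + t • (u - w)) [[0, 1]] U := by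
    simpa using mapsTo_add_smul_sub huw
  have hG' : ContinuousOn (fun t : ℝ => (u - w) * deriv G (w + t • (u - w))) [[0, 1]] :=
    continuousOn_const.mul ((hG.deriv hU).continuousOn.comp (by fun_prop) hmem)
  have hGseg : ∀ t ∈ [[0, 1]], HasDerivAt (fun s : ℝ => G (w + s • (u - w)))
      ((u - w) * deriv G (w + t • (u - w))) t := fun t ht => by
    have hGt := (hG.differentiableAt (hU.mem_nhds (hmem ht))).hasDerivAt
    simpa [Function.comp_def] using
      hGt.scomp t (((hasDerivAt_id t).smul_const (u - w)).const_add w)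
  have hparts := integral_smul_deriv_eq_deriv_smul (fun t _ => hφ t) hGseg
    (hφ'.intervalIntegrable _ _) hG'.intervalIntegrable
  simp only [segmentIntegral, ← integral_const_mul]
  simpa [mul_left_comm] using hparts

theorem differentiableOn_segmentIntegral {V : Set ℂ} (hV : IsOpen V) (hVc : Convex ℝ V)
    {G : ℂ → ℂ} (hG : DifferentiableOn ℂ G V) {φ : ℝ → ℝ} (hφ : Continuous φ) :
    DifferentiableOn ℂ (segmentIntegral φ G) (V ×ˢ V) := by
  let L : ℝ → ℂ × ℂ →L[ℂ] ℂ := fun t => .snd ℂ ℂ ℂ + t • (.fst ℂ ℂ ℂ - .snd ℂ ℂ ℂ)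
  have hL : Continuous L := continuous_const.add (continuous_id.smul continuous_const)
  have hseg : MapsTo (fun q : (ℂ × ℂ) × ℝ => q.1.2 + q.2 • (q.1.1 - q.1.2))
      ((V ×ˢ V) ×ˢ Icc 0 1) V := fun q hq => hVc.add_smul_sub_mem hq.1.2 hq.1.1 hq.2
  have hsegc : Continuous (fun q : (ℂ × ℂ) × ℝ => q.1.2 + q.2 • (q.1.1 - q.1.2)) := by fun_prop
  intro p hp
  refine (hasFDerivAt_intervalIntegral_of_continuousOn (hV.prod hV) zero_le_one
    (F' := fun p t => φ t • deriv G (p.2 + t • (p.1 - p.2)) • L t) ?_ ?_ ?_ hp).differentiableAt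
    |>.differentiableWithinAt
  · exact (hφ.comp continuous_snd).continuousOn.smul
      (hG.continuousOn.comp hsegc.continuousOn hseg)
  · exact (hφ.comp continuous_snd).continuousOn.smul
      (((hG.deriv hV).continuousOn.comp hsegc.continuousOn hseg).smul
        (hL.comp continuous_snd).continuousOn)
  · intro q hq t ht
    have hLt : HasFDerivAt (fun q : ℂ × ℂ => q.2 + t • (q.1 - q.2)) (L t) q :=
      (L t).hasFDerivAt.congr_of_eventuallyEq (.of_forall fun q => by simp [L])
    have hGt : HasDerivAt G (deriv G (q.2 + t • (q.1 - q.2))) (q.2 + t • (q.1 - q.2)) :=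
      (hG.differentiableAt (hV.mem_nhds (hseg (x := (q, t)) ⟨hq, ht⟩))).hasDerivAt
    exact (hGt.comp_hasFDerivAt q hLt).const_smul (φ t)

noncomputable def diagExtend (N : ℂ × ℂ → ℂ) (d : ℂ → ℂ) (p : ℂ × ℂ) : ℂ :=
  if p.1 = p.2 then d p.1 else N p / (p.1 - p.2)

section DiagExtend

variable {U : Set ℂ} {N : ℂ × ℂ → ℂ} {d G : ℂ → ℂ} {φ : ℝ → ℝ}

lemma diagExtend_eq_segmentIntegral (hd : ∀ z ∈ U, d z = segmentIntegral φ G (z, z))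
    (hN : ∀ u w, segment ℝ w u ⊆ U → N (u, w) = (u - w) * segmentIntegral φ G (u, w))
    {u w : ℂ} (huw : segment ℝ w u ⊆ U) :
    diagExtend N d (u, w) = segmentIntegral φ G (u, w) := by
  rcases eq_or_ne u w with rfl | hne
  · simp [diagExtend, hd u (huw (left_mem_segment ℝ u u))]
  · rw [diagExtend, if_neg hne, hN u w huw, mul_div_cancel_left₀ _ (sub_ne_zero.2 hne)]

theorem differentiableOn_diagExtend (hU : IsOpen U) (hNU : DifferentiableOn ℂ N (U ×ˢ U))
    (hG : DifferentiableOn ℂ G U) (hφ : Continuous φ)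
    (heq : ∀ u w, segment ℝ w u ⊆ U → diagExtend N d (u, w) = segmentIntegral φ G (u, w)) :
    DifferentiableOn ℂ (diagExtend N d) (U ×ˢ U) := by
  rintro ⟨u, w⟩ ⟨hu, hw⟩
  refine DifferentiableAt.differentiableWithinAt ?_
  rcases eq_or_ne u w with rfl | hne
  · obtain ⟨r, hr, hball⟩ := Metric.isOpen_iff.1 hU u hu
    have hB : ball u r ×ˢ ball u r ∈ 𝓝 (u, u) :=
      prod_mem_nhds (ball_mem_nhds u hr) (ball_mem_nhds u hr)
    refine ((differentiableOn_segmentIntegral isOpen_ball (convex_ball u r) (hG.mono hball)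
      hφ).differentiableAt hB).congr_of_eventuallyEq ?_
    filter_upwards [hB] with p hp
    exact heq p.1 p.2 (((convex_ball u r).segment_subset hp.2 hp.1).trans hball)
  · have hquot : DifferentiableAt ℂ (fun p => N p / (p.1 - p.2)) (u, w) :=
      (hNU.differentiableAt (prod_mem_nhds (hU.mem_nhds hu) (hU.mem_nhds hw))).fun_mul
        ((differentiableAt_fst.sub differentiableAt_snd).inv (sub_ne_zero.2 hne))
    refine hquot.congr_of_eventuallyEq ?_
    filter_upwards [(continuousAt_fst.ne_iff_eventually_ne continuousAt_snd).1 hne] with p hp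
    simp [diagExtend, hp]

end DiagExtend

/-! In divided-difference notation, `divDiff f (u, w) = f[u,w]`, `divDiffUUW f (u, w) = f[u,u,w]`,
`divDiffUWW f (u, w) = f[u,w,w]` and `divDiffUUWW f (u, w) = f[u,u,w,w]`. -/

noncomputable def divDiff (f : ℂ → ℂ) : ℂ × ℂ → ℂ :=
  diagExtend (fun p => f p.1 - f p.2) (deriv f)

noncomputable def divDiffUUW (f : ℂ → ℂ) : ℂ × ℂ → ℂ :=
  diagExtend (fun p => deriv f p.1 - divDiff f p) fun z => deriv (deriv f) z / 2

noncomputable def divDiffUWW (f : ℂ → ℂ) : ℂ × ℂ → ℂ :=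
  diagExtend (fun p => divDiff f p - deriv f p.2) fun z => deriv (deriv f) z / 2

noncomputable def divDiffUUWW (f : ℂ → ℂ) : ℂ × ℂ → ℂ :=
  diagExtend (fun p => divDiffUUW f p - divDiffUWW f p) fun z => deriv (deriv (deriv f)) z / 6

section DivDiff

variable {U : Set ℂ} (hU : IsOpen U) {f : ℂ → ℂ} (hf : DifferentiableOn ℂ f U)
include hU hf

lemma divDiff_eq_segmentIntegral {u w : ℂ} (huw : segment ℝ w u ⊆ U) :
    divDiff f (u, w) = segmentIntegral (fun _ => 1) (deriv f) (u, w) := by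
  refine diagExtend_eq_segmentIntegral (fun z _ => by simp [segmentIntegral_self])
    (fun u w huw => ?_) huw
  rw [sub_mul_segmentIntegral_deriv hU hf (fun t => hasDerivAt_const t (1 : ℝ))
    continuous_const huw]
  simp [segmentIntegral]

lemma divDiffUUW_eq_segmentIntegral {u w : ℂ} (huw : segment ℝ w u ⊆ U) :
    divDiffUUW f (u, w) = segmentIntegral id (deriv (deriv f)) (u, w) := by
  refine diagExtend_eq_segmentIntegral (fun z _ => by simp [segmentIntegral_self]; ring)
    (fun u w huw => ?_) huw
  rw [sub_mul_segmentIntegral_deriv hU (hf.deriv hU) hasDerivAt_id continuous_const huw,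
    divDiff_eq_segmentIntegral hU hf huw]
  simp

lemma divDiffUWW_eq_segmentIntegral {u w : ℂ} (huw : segment ℝ w u ⊆ U) :
    divDiffUWW f (u, w) = segmentIntegral (fun t => 1 - t) (deriv (deriv f)) (u, w) := by
  refine diagExtend_eq_segmentIntegral (fun z _ => ?_) (fun u w huw => ?_) huw
  · rw [segmentIntegral_self,
      integral_sub intervalIntegrable_const intervalIntegral.intervalIntegrable_id]
    norm_num
    ring
  rw [sub_mul_segmentIntegral_deriv hU (hf.deriv hU) (φ := fun t => 1 - t)
    (fun t => (hasDerivAt_id t).const_sub 1) continuous_const huw,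
    divDiff_eq_segmentIntegral hU hf huw]
  simp [segmentIntegral, integral_neg]
  ring

lemma divDiffUUWW_eq_segmentIntegral {u w : ℂ} (huw : segment ℝ w u ⊆ U) :
    divDiffUUWW f (u, w) =
      segmentIntegral (fun t => t * (1 - t)) (deriv (deriv (deriv f))) (u, w) := by
  have hf₂ := (hf.deriv hU).deriv hU
  refine diagExtend_eq_segmentIntegral (fun z _ => ?_) (fun u w huw => ?_) huw
  · rw [segmentIntegral_self]
    norm_num [mul_one_sub, ← sq, integral_sub]
    ring
  have hφ : ∀ t : ℝ, HasDerivAt (fun t => t * (1 - t)) (((fun t => 1 - t) - id : ℝ → ℝ) t) t :=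
    fun t => ((hasDerivAt_id t).mul ((hasDerivAt_id t).const_sub 1)).congr_deriv (by simp; ring)
  rw [sub_mul_segmentIntegral_deriv hU hf₂ hφ (by fun_prop) huw,
    segmentIntegral_sub (by fun_prop) continuous_id hf₂.continuousOn huw,
    divDiffUUW_eq_segmentIntegral hU hf huw, divDiffUWW_eq_segmentIntegral hU hf huw]
  simp

lemma differentiableOn_divDiff : DifferentiableOn ℂ (divDiff f) (U ×ˢ U) :=
  differentiableOn_diagExtend hU
    ((hf.comp differentiableOn_fst fun _ hp => hp.1).sub
      (hf.comp differentiableOn_snd fun _ hp => hp.2))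
    (hf.deriv hU) continuous_const fun _ _ => divDiff_eq_segmentIntegral hU hf

lemma differentiableOn_divDiffUUW : DifferentiableOn ℂ (divDiffUUW f) (U ×ˢ U) :=
  differentiableOn_diagExtend hU
    (((hf.deriv hU).comp differentiableOn_fst fun _ hp => hp.1).sub
      (differentiableOn_divDiff hU hf))
    ((hf.deriv hU).deriv hU) continuous_id fun _ _ => divDiffUUW_eq_segmentIntegral hU hf

lemma differentiableOn_divDiffUWW : DifferentiableOn ℂ (divDiffUWW f) (U ×ˢ U) :=
  differentiableOn_diagExtend hU
    ((differentiableOn_divDiff hU hf).sub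
      ((hf.deriv hU).comp differentiableOn_snd fun _ hp => hp.2))
    ((hf.deriv hU).deriv hU) (by fun_prop) fun _ _ => divDiffUWW_eq_segmentIntegral hU hf

lemma differentiableOn_divDiffUUWW : DifferentiableOn ℂ (divDiffUUWW f) (U ×ˢ U) :=
  differentiableOn_diagExtend hU
    ((differentiableOn_divDiffUUW hU hf).sub (differentiableOn_divDiffUWW hU hf))
    (((hf.deriv hU).deriv hU).deriv hU) (by fun_prop)
    fun _ _ => divDiffUUWW_eq_segmentIntegral hU hf

lemma divDiff_ne_zero (hinj : InjOn f U) {p : ℂ × ℂ} (hp : p ∈ U ×ˢ U) : divDiff f p ≠ 0 := by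
  rcases eq_or_ne p.1 p.2 with hpe | hne
  · simpa [divDiff, diagExtend, hpe] using deriv_ne_zero_of_injOn hU hf hinj hp.2
  · simp only [divDiff, diagExtend, if_neg hne]
    exact div_ne_zero (sub_ne_zero.2 (hinj.ne hp.1 hp.2 hne)) (sub_ne_zero.2 hne)

end DivDiff

lemma divDiff_kernel_eq {f : ℂ → ℂ} {u w : ℂ} (huw : u ≠ w) (hf : f u ≠ f w) :
    (divDiff f (u, w) * divDiffUUWW f (u, w) - divDiffUUW f (u, w) * divDiffUWW f (u, w)) /
        divDiff f (u, w) ^ 2 =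
      deriv f u * deriv f w / (f u - f w) ^ 2 - 1 / (u - w) ^ 2 := by
  have h₁ : u - w ≠ 0 := sub_ne_zero.2 huw
  have h₂ : f u - f w ≠ 0 := sub_ne_zero.2 hf
  simp only [divDiffUUWW, divDiffUUW, divDiffUWW, divDiff, diagExtend, if_neg huw]
  field_simp
  ring

theorem grunsky_kernel_extends (U : Set ℂ) (hU : IsOpen U) (f : ℂ → ℂ)
    (hf : DifferentiableOn ℂ f U) (hinj : Set.InjOn f U) :
    ∃ F : ℂ × ℂ → ℂ, DifferentiableOn ℂ F (U ×ˢ U) ∧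
      ∀ u ∈ U, ∀ w ∈ U, u ≠ w →
        F (u, w) = deriv f u * deriv f w / (f u - f w) ^ 2 - 1 / (u - w) ^ 2 := by
  refine ⟨(divDiff f * divDiffUUWW f - divDiffUUW f * divDiffUWW f) / divDiff f ^ 2, ?_,
    fun u hu w hw huw => divDiff_kernel_eq huw (hinj.ne hu hw huw)⟩
  have hg := differentiableOn_divDiff hU hf
  rw [div_eq_mul_inv]
  exact ((hg.mul (differentiableOn_divDiffUUWW hU hf)).sub
    ((differentiableOn_divDiffUUW hU hf).mul (differentiableOn_divDiffUWW hU hf))).mul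
    ((hg.pow 2).inv fun p hp => pow_ne_zero 2 (divDiff_ne_zero hU hf hinj hp))
end

section
/- Let U ⊆ ℂ be open and let f be holomorphic on U. Then there exists a function G of two complex variables, holomorphic on U × U, such that G(u, w)·(u − w) = f(u) − f(w) for all u, w ∈ U and G(u, u) = f'(u) for all u ∈ U. If moreover f is injective and f' is nowhere zero on U, then G(u, w) ≠ 0 for all u, w ∈ U. (This is the regularity of the difference quotient (f(u)−f(w))/(u−w) underlying the definition of the Grunsky coefficients.) -/
/-!
On a convex open set the difference quotient is the mean of `f'` along the segment from `w` to
`u`, `G (u, w) = ∫₀¹ f' (w + t (u - w)) dt`; this integral is jointly holomorphic by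
differentiation under the integral sign, `f''` being bounded on a closed disc inside `U`.
Away from the diagonal `G` is the quotient `(f u - f w) / (u - w)` of holomorphic functions.
-/

open Set Filter Metric Topology Interval MeasureTheory ContinuousLinearMap

noncomputable section

def segmentMeanDeriv (f : ℂ → ℂ) (p : ℂ × ℂ) : ℂ :=
  ∫ t in (0 : ℝ)..1, deriv f (p.2 + t • (p.1 - p.2))

def differenceQuotient (f : ℂ → ℂ) (p : ℂ × ℂ) : ℂ :=
  dslope f p.2 p.1

end

section SegmentMeanDeriv

variable {f : ℂ → ℂ} {V : Set ℂ}

theorem segmentMeanDeriv_diag (f : ℂ → ℂ) (u : ℂ) : segmentMeanDeriv f (u, u) = deriv f u := by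
  simp [segmentMeanDeriv]

theorem segmentMeanDeriv_mul_sub (hV : IsOpen V) (hVc : Convex ℝ V) (hf : DifferentiableOn ℂ f V)
    {u w : ℂ} (hu : u ∈ V) (hw : w ∈ V) :
    segmentMeanDeriv f (u, w) * (u - w) = f u - f w := by
  have hseg : MapsTo (fun t : ℝ => w + t • (u - w)) [[(0 : ℝ), 1]] V := fun t ht => by
    rw [uIcc_of_le zero_le_one] at ht
    exact hVc.add_smul_sub_mem hw hu ht
  have hderiv : ∀ t ∈ [[(0 : ℝ), 1]],
      HasDerivAt (fun t : ℝ => f (w + t • (u - w))) (deriv f (w + t • (u - w)) * (u - w)) t := by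
    intro t ht
    have hγ : HasDerivAt (fun t : ℝ => w + t • (u - w)) (u - w) t := by
      simpa using ((hasDerivAt_id t).smul_const (u - w)).const_add w
    exact (hf.differentiableAt (hV.mem_nhds (hseg ht))).hasDerivAt.comp t hγ
  have hint : IntervalIntegrable (fun t : ℝ => deriv f (w + t • (u - w)) * (u - w)) volume 0 1 :=
    (((hf.deriv hV).continuousOn.comp (by fun_prop) hseg).mul continuousOn_const).intervalIntegrable
  rw [segmentMeanDeriv, ← intervalIntegral.integral_mul_const,
    intervalIntegral.integral_eq_sub_of_hasDerivAt hderiv hint]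
  simp

theorem differentiableOn_segmentMeanDeriv (hV : IsOpen V) (hVc : Convex ℝ V)
    (hf : DifferentiableOn ℂ f V) {M : ℝ} (hM : ∀ z ∈ V, ‖deriv (deriv f) z‖ ≤ M) :
    DifferentiableOn ℂ (segmentMeanDeriv f) (V ×ˢ V) := by
  set L : ℝ → ℂ × ℂ →L[ℂ] ℂ := fun t => snd ℂ ℂ ℂ + t • (fst ℂ ℂ ℂ - snd ℂ ℂ ℂ)
  have hL : segmentMeanDeriv f = fun p => ∫ t in (0 : ℝ)..1, deriv f (L t p) := by
    ext p; simp [segmentMeanDeriv, L]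
  have hLcont : Continuous L := by fun_prop
  have hseg : ∀ p ∈ V ×ˢ V, MapsTo (fun t => L t p) [[(0 : ℝ), 1]] V := fun p hp t ht => by
    rw [uIcc_of_le zero_le_one] at ht
    simpa [L] using hVc.add_smul_sub_mem hp.2 hp.1 ht
  have hcomp : ∀ g : ℂ → ℂ, ContinuousOn g V → ∀ p ∈ V ×ˢ V,
      ContinuousOn (fun t => g (L t p)) [[(0 : ℝ), 1]] := fun g hg p hp =>
    hg.comp (hLcont.clm_apply continuous_const).continuousOn (hseg p hp)
  have hf' : DifferentiableOn ℂ (deriv f) V := hf.deriv hV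
  have hf'' : ContinuousOn (deriv (deriv f)) V := (hf'.deriv hV).continuousOn
  rw [hL]
  intro p₀ hp₀
  refine (intervalIntegral.hasFDerivAt_integral_of_dominated_of_fderiv_le
    (F' := fun p t => deriv (deriv f) (L t p) • L t) (bound := fun t => M * ‖L t‖)
    ((hV.prod hV).mem_nhds hp₀) ?_ ?_ ?_ ?_ ?_ ?_).differentiableAt.differentiableWithinAt
  · filter_upwards [(hV.prod hV).mem_nhds hp₀] with p hp
    exact ((hcomp _ hf'.continuousOn p hp).mono uIoc_subset_uIcc).aestronglyMeasurable
      measurableSet_uIoc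
  · exact (hcomp _ hf'.continuousOn p₀ hp₀).intervalIntegrable
  · exact (((hcomp _ hf'' p₀ hp₀).smul hLcont.continuousOn).mono
      uIoc_subset_uIcc).aestronglyMeasurable measurableSet_uIoc
  · refine .of_forall fun t ht p hp => ?_
    rw [norm_smul]
    exact mul_le_mul_of_nonneg_right (hM _ (hseg p hp (uIoc_subset_uIcc ht))) (norm_nonneg _)
  · exact (continuous_const.mul hLcont.norm).intervalIntegrable _ _
  · refine .of_forall fun t ht p hp => ?_
    have hz := hV.mem_nhds (hseg p hp (uIoc_subset_uIcc ht))
    exact (hf'.differentiableAt hz).hasDerivAt.comp_hasFDerivAt p (L t).hasFDerivAt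

end SegmentMeanDeriv

section DifferenceQuotient

variable {f : ℂ → ℂ} {U : Set ℂ}

theorem differenceQuotient_mul_sub (f : ℂ → ℂ) (u w : ℂ) :
    differenceQuotient f (u, w) * (u - w) = f u - f w := by
  rw [mul_comm]
  exact sub_smul_dslope f w u

theorem differenceQuotient_diag (f : ℂ → ℂ) (u : ℂ) : differenceQuotient f (u, u) = deriv f u :=
  dslope_same f u

theorem differenceQuotient_ne_zero (hinj : InjOn f U) (hderiv : ∀ u ∈ U, deriv f u ≠ 0)
    {u w : ℂ} (hu : u ∈ U) (hw : w ∈ U) : differenceQuotient f (u, w) ≠ 0 := by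
  rcases eq_or_ne u w with rfl | huw
  · rw [differenceQuotient_diag]
    exact hderiv u hu
  · intro h
    have := differenceQuotient_mul_sub f u w
    rw [h, zero_mul, eq_comm, sub_eq_zero] at this
    exact huw (hinj hu hw this)

theorem eqOn_differenceQuotient_segmentMeanDeriv (hU : IsOpen U) (hUc : Convex ℝ U)
    (hf : DifferentiableOn ℂ f U) : EqOn (differenceQuotient f) (segmentMeanDeriv f) (U ×ˢ U) := by
  rintro ⟨u, w⟩ ⟨hu, hw⟩
  rcases eq_or_ne u w with rfl | huw
  · rw [differenceQuotient_diag, segmentMeanDeriv_diag]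
  · refine mul_right_cancel₀ (sub_ne_zero.2 huw) ?_
    rw [differenceQuotient_mul_sub, segmentMeanDeriv_mul_sub hU hUc hf hu hw]

theorem differentiableAt_differenceQuotient_of_ne {u w : ℂ} (hu : DifferentiableAt ℂ f u)
    (hw : DifferentiableAt ℂ f w) (huw : u ≠ w) :
    DifferentiableAt ℂ (differenceQuotient f) (u, w) := by
  have hslope : (fun p : ℂ × ℂ => (p.1 - p.2)⁻¹ * (f p.1 - f p.2)) =ᶠ[𝓝 (u, w)]
      differenceQuotient f := by
    filter_upwards [(isOpen_ne_fun continuous_fst continuous_snd).mem_nhds huw] with p hp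
    rw [differenceQuotient, dslope_of_ne f hp, slope_def_module, smul_eq_mul]
  refine DifferentiableAt.congr_of_eventuallyEq ?_ hslope.symm
  have hsub : DifferentiableAt ℂ (fun p : ℂ × ℂ => p.1 - p.2) (u, w) := by fun_prop
  have hnum : DifferentiableAt ℂ (fun p : ℂ × ℂ => f p.1 - f p.2) (u, w) :=
    (hu.comp (u, w) differentiableAt_fst).sub (hw.comp (u, w) differentiableAt_snd)
  exact (hsub.inv (sub_ne_zero.2 huw)).mul hnum

theorem differentiableAt_differenceQuotient_diag (hU : IsOpen U) (hf : DifferentiableOn ℂ f U)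
    {u : ℂ} (hu : u ∈ U) : DifferentiableAt ℂ (differenceQuotient f) (u, u) := by
  obtain ⟨r, hr, hrU⟩ := nhds_basis_closedBall.mem_iff.1 (hU.mem_nhds hu)
  obtain ⟨M, hM⟩ := (isCompact_closedBall u r).exists_bound_of_continuousOn
    (((hf.deriv hU).deriv hU).continuousOn.mono hrU)
  have hball : ball u r ⊆ U := ball_subset_closedBall.trans hrU
  have hnhds : ball u r ×ˢ ball u r ∈ 𝓝 (u, u) :=
    (isOpen_ball.prod isOpen_ball).mem_nhds ⟨mem_ball_self hr, mem_ball_self hr⟩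
  refine DifferentiableAt.congr_of_eventuallyEq ?_
    (eventually_of_mem hnhds (eqOn_differenceQuotient_segmentMeanDeriv isOpen_ball
      (convex_ball u r) (hf.mono hball)))
  exact (differentiableOn_segmentMeanDeriv isOpen_ball (convex_ball u r) (hf.mono hball)
    fun z hz => hM z (ball_subset_closedBall hz)).differentiableAt hnhds

theorem differentiableOn_differenceQuotient (hU : IsOpen U) (hf : DifferentiableOn ℂ f U) :
    DifferentiableOn ℂ (differenceQuotient f) (U ×ˢ U) := by
  rintro ⟨u, w⟩ ⟨hu, hw⟩
  rcases eq_or_ne u w with rfl | huw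
  · exact (differentiableAt_differenceQuotient_diag hU hf hu).differentiableWithinAt
  · exact (differentiableAt_differenceQuotient_of_ne (hf.differentiableAt (hU.mem_nhds hu))
      (hf.differentiableAt (hU.mem_nhds hw)) huw).differentiableWithinAt

end DifferenceQuotient

theorem difference_quotient_regular (U : Set ℂ) (hU : IsOpen U) (f : ℂ → ℂ)
    (hf : DifferentiableOn ℂ f U) :
    ∃ G : ℂ × ℂ → ℂ, DifferentiableOn ℂ G (U ×ˢ U) ∧
      (∀ u ∈ U, ∀ w ∈ U, G (u, w) * (u - w) = f u - f w) ∧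
      (∀ u ∈ U, G (u, u) = deriv f u) ∧
      (Set.InjOn f U → (∀ u ∈ U, deriv f u ≠ 0) →
        ∀ u ∈ U, ∀ w ∈ U, G (u, w) ≠ 0) :=
  ⟨differenceQuotient f, differentiableOn_differenceQuotient hU hf,
    fun u _ w _ => differenceQuotient_mul_sub f u w, fun u _ => differenceQuotient_diag f u,
    fun hinj hderiv _ hu _ hw => differenceQuotient_ne_zero hinj hderiv hu hw⟩
end

section
/- Let U_v, U_u ⊆ ℂ be open, let K_v ⊆ U_v be compact, let v be injective and holomorphic on U_v with nowhere-vanishing derivative, set K_u = v(K_v) and assume K_u ⊆ U_u, and let u be holomorphic on U_u with nowhere-vanishing derivative. Let W ⊆ ℂ be open with K_u ⊆ W, and let s be holomorphic on W with s(W) ⊆ U_v, v(s(w)) = w for all w ∈ W, and s(K_u) = K_v. Then E(K_v, u∘v) = E(K_u, u) + E(K_v, v) − 2 Re ∫_{K_u} (u''(w)/u'(w)) · conj(s''(w)/s'(w)) d²w. -/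
/-! Write `S f = f'' / f'` for the pre-Schwarzian. The chain rule gives
`S (u ∘ v) = (S u ∘ v) · v' + S v`, so `|S (u ∘ v)|²` splits into `|S u ∘ v|² |v'|²`, `|S v|²`
and the cross term `2 Re ((S u ∘ v) v' · conj (S v))`. The substitution `w = v z`, whose real
Jacobian is `|v'|²`, turns the first integral into `E(K_u, u)`. Differentiating `v ∘ s = id` twice
gives `v'(s w) s'(w) = 1` and `S s = -(S v ∘ s) · s'`, which turns the cross term into minus the
integral of `S u · conj (S s)` over `K_u`. -/

open MeasureTheory Complex

/-- The energy functional `E(K, w) = ∫_K |w''(z)/w'(z)|² d²z`. -/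
noncomputable def energy (K : Set ℂ) (w : ℂ → ℂ) : ℝ :=
  ∫ z in K, ‖deriv (deriv w) z / deriv w z‖ ^ 2

open Filter Topology Set ComplexConjugate

section PreSchwarzian

variable {𝕜 : Type*} [NontriviallyNormedField 𝕜] {f g : 𝕜 → 𝕜} {x : 𝕜}

noncomputable def preSchwarzian (f : 𝕜 → 𝕜) (x : 𝕜) : 𝕜 := deriv (deriv f) x / deriv f x

theorem deriv_mul_deriv_of_eventually_leftInverse (hf : DifferentiableAt 𝕜 f (g x))
    (hg : DifferentiableAt 𝕜 g x) (hfg : ∀ᶠ y in 𝓝 x, f (g y) = y) :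
    deriv f (g x) * deriv g x = 1 := by
  rw [← deriv_comp x hf hg, (show f ∘ g =ᶠ[𝓝 x] id from hfg).deriv_eq, deriv_id]

variable [CompleteSpace 𝕜]

theorem deriv_deriv_comp (hf : AnalyticAt 𝕜 f (g x)) (hg : AnalyticAt 𝕜 g x) :
    deriv (deriv (f ∘ g)) x =
      deriv (deriv f) (g x) * deriv g x ^ 2 + deriv f (g x) * deriv (deriv g) x := by
  have hfg : ∀ᶠ y in 𝓝 x, AnalyticAt 𝕜 f (g y) :=
    hg.continuousAt.eventually hf.eventually_analyticAt
  have hchain : deriv (f ∘ g) =ᶠ[𝓝 x] fun y => deriv f (g y) * deriv g y := by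
    filter_upwards [hfg, hg.eventually_analyticAt] with y hfy hgy
    exact deriv_comp y hfy.differentiableAt hgy.differentiableAt
  have hf'g : DifferentiableAt 𝕜 (fun y => deriv f (g y)) x :=
    hf.deriv.differentiableAt.comp x hg.differentiableAt
  have hderiv_f'g : deriv (fun y => deriv f (g y)) x = deriv (deriv f) (g x) * deriv g x :=
    deriv_comp x hf.deriv.differentiableAt hg.differentiableAt
  rw [hchain.deriv_eq, deriv_fun_mul hf'g hg.deriv.differentiableAt, hderiv_f'g]
  ring

theorem preSchwarzian_comp (hf : AnalyticAt 𝕜 f (g x)) (hg : AnalyticAt 𝕜 g x)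
    (hf' : deriv f (g x) ≠ 0) (hg' : deriv g x ≠ 0) :
    preSchwarzian (f ∘ g) x = preSchwarzian f (g x) * deriv g x + preSchwarzian g x := by
  rw [preSchwarzian, deriv_deriv_comp hf hg, deriv_comp x hf.differentiableAt hg.differentiableAt,
    preSchwarzian, preSchwarzian]
  field_simp

theorem preSchwarzian_of_eventually_leftInverse (hf : AnalyticAt 𝕜 f (g x))
    (hg : AnalyticAt 𝕜 g x) (hfg : ∀ᶠ y in 𝓝 x, f (g y) = y) :
    preSchwarzian g x = -(preSchwarzian f (g x) * deriv g x) := by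
  have hinv :=
    deriv_mul_deriv_of_eventually_leftInverse hf.differentiableAt hg.differentiableAt hfg
  have hcomp : deriv (deriv (f ∘ g)) x = 0 := by
    have hderiv_one : deriv (f ∘ g) =ᶠ[𝓝 x] fun _ => 1 := by
      filter_upwards [(show f ∘ g =ᶠ[𝓝 x] id from hfg).eventuallyEq_nhds] with y hy
      rw [hy.deriv_eq, deriv_id]
    rw [hderiv_one.deriv_eq, deriv_const]
  rw [deriv_deriv_comp hf hg] at hcomp
  have hf' : deriv f (g x) ≠ 0 := left_ne_zero_of_mul_eq_one hinv
  rw [preSchwarzian, preSchwarzian, div_eq_iff (right_ne_zero_of_mul_eq_one hinv)]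
  field_simp
  linear_combination hcomp

theorem AnalyticOnNhd.continuousOn_preSchwarzian {U : Set 𝕜} (hf : AnalyticOnNhd 𝕜 f U)
    (hf' : ∀ x ∈ U, deriv f x ≠ 0) : ContinuousOn (preSchwarzian f) U :=
  hf.deriv.deriv.continuousOn.div hf.deriv.continuousOn hf'

end PreSchwarzian

theorem det_restrictScalars_toSpanSingleton (c : ℂ) :
    ((ContinuousLinearMap.toSpanSingleton ℂ c).restrictScalars ℝ).det = normSq c := by
  rw [ContinuousLinearMap.det, ContinuousLinearMap.coe_restrictScalars,
    LinearMap.det_restrictScalars, ← ContinuousLinearMap.det,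
    ContinuousLinearMap.det_toSpanSingleton, Algebra.norm_complex_apply]

theorem integral_image_eq_integral_normSq_deriv_smul {E : Type*} [NormedAddCommGroup E]
    [NormedSpace ℝ E] {f : ℂ → ℂ} {K : Set ℂ} (hK : MeasurableSet K)
    (hf : ∀ x ∈ K, DifferentiableAt ℂ f x) (hinj : InjOn f K) (g : ℂ → E) :
    ∫ x in f '' K, g x = ∫ x in K, normSq (deriv f x) • g (f x) := by
  rw [integral_image_eq_integral_abs_det_fderiv_smul volume hK
    (fun x hx => ((hf x hx).hasDerivAt.hasFDerivAt.restrictScalars ℝ).hasFDerivWithinAt) hinj g]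
  simp only [det_restrictScalars_toSpanSingleton, abs_of_nonneg (normSq_nonneg _)]

theorem integral_norm_add_sq {X : Type*} [TopologicalSpace X] [T2Space X] [MeasurableSpace X]
    [OpensMeasurableSpace X] {μ : Measure X} [IsFiniteMeasureOnCompacts μ] {K : Set X}
    (hK : IsCompact K) {f g : X → ℂ} (hf : ContinuousOn f K) (hg : ContinuousOn g K) :
    ∫ x in K, ‖f x + g x‖ ^ 2 ∂μ =
      ∫ x in K, ‖f x‖ ^ 2 ∂μ + ∫ x in K, ‖g x‖ ^ 2 ∂μ + 2 * (∫ x in K, f x * conj (g x) ∂μ).re := by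
  have hfg : ContinuousOn (fun x => f x * conj (g x)) K :=
    hf.mul (continuous_conj.comp_continuousOn hg)
  simp only [Complex.sq_norm, normSq_add]
  have hf2 : IntegrableOn (fun x => normSq (f x)) K μ :=
    (continuous_normSq.comp_continuousOn hf).integrableOn_compact hK
  have hg2 : IntegrableOn (fun x => normSq (g x)) K μ :=
    (continuous_normSq.comp_continuousOn hg).integrableOn_compact hK
  have hfg' : IntegrableOn (fun x => (f x * conj (g x)).re) K μ :=
    (continuous_re.comp_continuousOn hfg).integrableOn_compact hK
  have hsum : IntegrableOn (fun x => normSq (f x) + normSq (g x)) K μ := hf2.add hg2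
  rw [integral_add hsum (hfg'.const_mul 2), integral_add hf2 hg2, integral_const_mul]
  congr 2
  exact integral_re (hfg.integrableOn_compact hK)

theorem energy_image {K : Set ℂ} (hK : MeasurableSet K) {v : ℂ → ℂ}
    (hv : ∀ z ∈ K, DifferentiableAt ℂ v z) (hvinj : InjOn v K) (u : ℂ → ℂ) :
    energy (v '' K) u = ∫ z in K, ‖preSchwarzian u (v z) * deriv v z‖ ^ 2 := by
  rw [energy, integral_image_eq_integral_normSq_deriv_smul hK hv hvinj]
  refine setIntegral_congr_fun hK fun z _ => ?_
  rw [smul_eq_mul, normSq_eq_norm_sq, norm_mul, preSchwarzian]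
  ring

theorem integral_image_mul_conj_preSchwarzian_of_leftInverse {K : Set ℂ} (hK : MeasurableSet K)
    {v s : ℂ → ℂ} (hv : ∀ z ∈ K, AnalyticAt ℂ v z) (hvinj : InjOn v K)
    (hs : ∀ z ∈ K, AnalyticAt ℂ s (v z)) (hsv : ∀ z ∈ K, s (v z) = z)
    (hvs : ∀ z ∈ K, ∀ᶠ w in 𝓝 (v z), v (s w) = w) (F : ℂ → ℂ) :
    ∫ w in v '' K, F w * conj (preSchwarzian s w) =
      -∫ z in K, F (v z) * deriv v z * conj (preSchwarzian v z) := by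
  rw [integral_image_eq_integral_normSq_deriv_smul hK (fun z hz => (hv z hz).differentiableAt)
    hvinj, ← integral_neg]
  refine setIntegral_congr_fun hK fun z hz => ?_
  have hvsz : AnalyticAt ℂ v (s (v z)) := (hsv z hz).symm ▸ hv z hz
  have hinv := deriv_mul_deriv_of_eventually_leftInverse hvsz.differentiableAt
    (hs z hz).differentiableAt (hvs z hz)
  have hpre := preSchwarzian_of_eventually_leftInverse hvsz (hs z hz) (hvs z hz)
  rw [hsv z hz] at hinv hpre
  have hinv_conj : conj (deriv v z) * conj (deriv s (v z)) = 1 := by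
    rw [← map_mul, hinv, map_one]
  rw [hpre, real_smul, ← mul_conj]
  simp only [map_mul, map_neg]
  linear_combination (-deriv v z * F (v z) * conj (preSchwarzian v z)) * hinv_conj

theorem energy_of_composition_general
    (Uv Uu : Set ℂ) (hUv : IsOpen Uv) (hUu : IsOpen Uu)
    (Kv : Set ℂ) (hKv : IsCompact Kv) (hKvUv : Kv ⊆ Uv)
    (v : ℂ → ℂ) (hv : DifferentiableOn ℂ v Uv) (hvinj : Set.InjOn v Uv)
    (hv' : ∀ z ∈ Uv, deriv v z ≠ 0)
    (Ku : Set ℂ) (hKu : Ku = v '' Kv) (hKuUu : Ku ⊆ Uu)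
    (u : ℂ → ℂ) (hu : DifferentiableOn ℂ u Uu) (hu' : ∀ z ∈ Uu, deriv u z ≠ 0)
    (W : Set ℂ) (hW : IsOpen W) (hKuW : Ku ⊆ W)
    (s : ℂ → ℂ) (hs : DifferentiableOn ℂ s W) (hsW : s '' W ⊆ Uv)
    (hvs : ∀ w ∈ W, v (s w) = w) :
    energy Kv (u ∘ v) = energy Ku u + energy Kv v -
      2 * (∫ w in Ku, (deriv (deriv u) w / deriv u w) *
        (starRingEnd ℂ) (deriv (deriv s) w / deriv s w)).re := by
  subst hKu
  have hva : AnalyticOnNhd ℂ v Uv := hv.analyticOnNhd hUv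
  have hua : AnalyticOnNhd ℂ u Uu := hu.analyticOnNhd hUu
  have hvKu : ∀ z ∈ Kv, v z ∈ Uu := fun z hz => hKuUu (mem_image_of_mem v hz)
  have hvW : ∀ z ∈ Kv, v z ∈ W := fun z hz => hKuW (mem_image_of_mem v hz)
  have hA : ContinuousOn (fun z => preSchwarzian u (v z) * deriv v z) Kv :=
    ((hua.continuousOn_preSchwarzian hu').comp (hv.continuousOn.mono hKvUv) hvKu).mul
      (hva.deriv.continuousOn.mono hKvUv)
  have hB : ContinuousOn (preSchwarzian v) Kv :=
    (hva.continuousOn_preSchwarzian hv').mono hKvUv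
  have hcomp : energy Kv (u ∘ v) =
      ∫ z in Kv, ‖preSchwarzian u (v z) * deriv v z + preSchwarzian v z‖ ^ 2 :=
    setIntegral_congr_fun hKv.measurableSet fun z hz => by
      rw [← preSchwarzian_comp (hua _ (hvKu z hz)) (hva z (hKvUv hz)) (hu' _ (hvKu z hz))
        (hv' z (hKvUv hz))]
      rfl
  have hcross := integral_image_mul_conj_preSchwarzian_of_leftInverse hKv.measurableSet
    (fun z hz => hva z (hKvUv hz)) (hvinj.mono hKvUv)
    (fun z hz => hs.analyticAt (hW.mem_nhds (hvW z hz)))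
    (fun z hz => hvinj (hsW (mem_image_of_mem s (hvW z hz))) (hKvUv hz) (hvs _ (hvW z hz)))
    (fun z hz => eventually_of_mem (hW.mem_nhds (hvW z hz)) hvs) (preSchwarzian u)
  rw [hcomp, integral_norm_add_sq hKv hA hB, energy_image hKv.measurableSet
    (fun z hz => hv.differentiableAt (hUv.mem_nhds (hKvUv hz))) (hvinj.mono hKvUv)]
  change _ = _ + _ - 2 * (∫ w in v '' Kv, preSchwarzian u w * conj (preSchwarzian s w)).re
  rw [hcross, neg_re, mul_neg, sub_neg_eq_add]
  rfl

theorem energy_of_composition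
    (Uv Uu : Set ℂ) (hUv : IsOpen Uv) (hUu : IsOpen Uu)
    (Kv : Set ℂ) (hKv : IsCompact Kv) (hKvUv : Kv ⊆ Uv)
    (v : ℂ → ℂ) (hv : DifferentiableOn ℂ v Uv) (hvinj : Set.InjOn v Uv)
    (hv' : ∀ z ∈ Uv, deriv v z ≠ 0)
    (Ku : Set ℂ) (hKu : Ku = v '' Kv) (hKuUu : Ku ⊆ Uu)
    (u : ℂ → ℂ) (hu : DifferentiableOn ℂ u Uu) (hu' : ∀ z ∈ Uu, deriv u z ≠ 0)
    (W : Set ℂ) (hW : IsOpen W) (hKuW : Ku ⊆ W)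
    (s : ℂ → ℂ) (hs : DifferentiableOn ℂ s W) (hsW : s '' W ⊆ Uv)
    (hvs : ∀ w ∈ W, v (s w) = w) (hsKu : s '' Ku = Kv) :
    energy Kv (u ∘ v) = energy Ku u + energy Kv v -
      2 * (∫ w in Ku, (deriv (deriv u) w / deriv u w) *
        (starRingEnd ℂ) (deriv (deriv s) w / deriv s w)).re :=
  energy_of_composition_general Uv Uu hUv hUu Kv hKv hKvUv v hv hvinj hv' Ku hKu hKuUu u hu hu' W hW
    hKuW s hs hsW hvs
end

section
/- Let a, b ∈ ℂ with |a|² − |b|² = 1 and let v(z) = (a z + b)/(conj(b) z + conj(a)) be the corresponding Möbius transformation of the unit disk. Then ∫_{|z|<1} |v''(z)/v'(z)|² d²z = 4π log(|a|²). -/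
/-!
Since `v'' / v' = -2 b̄ / (b̄ z + ā)`, the integrand is `4 ‖b‖² / ‖b̄ z + ā‖²`. On the circle
`‖z‖ = r` the function `‖c z + d‖⁻²` is a constant multiple of the Poisson kernel, so its circle
average is `(‖d‖² - ‖c‖² r²)⁻¹`. Integrating in polar coordinates leaves the radial integral
`∫₀¹ 8π ‖b‖² r / (‖a‖² - ‖b‖² r²) dr = 4π (log ‖a‖² - log (‖a‖² - ‖b‖²)) = 4π log ‖a‖²`.
-/

open MeasureTheory Complex ComplexConjugate Set Metric Filter Topology Real Interval

theorem mul_add_ne_zero_of_norm_mul_lt {𝕜 : Type*} [NormedDivisionRing 𝕜] {c d z : 𝕜}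
    (h : ‖c‖ * ‖z‖ < ‖d‖) : c * z + d ≠ 0 := by
  intro h0
  rw [← norm_neg d, ← eq_neg_of_add_eq_zero_left h0, norm_mul] at h
  exact lt_irrefl _ h

theorem circleAverage_poissonKernel {c w : ℂ} {R : ℝ} (hw : w ∈ ball c R) :
    circleAverage (poissonKernel c w) c R = 1 := by
  have hR : 0 < R := pos_of_mem_ball hw
  have hP : CircleIntegrable (poissonKernel c w) c R := by
    refine ContinuousOn.circleIntegrable hR.le ?_
    rw [poissonKernel_eq_re_herglotzRieszKernel, ← abs_of_pos hR]
    exact continuous_re.comp_continuousOn (continuousOn_herglotzRieszKernel_sphere hw)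
  apply Complex.ofReal_injective
  rw [← Complex.ofRealCLM_apply, ← Complex.ofRealCLM.circleAverage_comp_comm hP]
  have := (differentiableOn_const (1 : ℂ)).diffContOnCl.circleAverage_poissonKernel_smul hw
  simpa only [Function.comp_def, ofRealCLM_apply, ofReal_one, Pi.smul_def', real_smul, mul_one]
    using this

theorem norm_neg_conj_mul_div_conj {c d : ℂ} {r : ℝ} :
    ‖-(conj c * r ^ 2 / conj d)‖ = ‖c‖ * r ^ 2 / ‖d‖ := by
  rw [norm_neg, norm_div, norm_mul, norm_conj, norm_conj, norm_pow, norm_real, Real.norm_eq_abs,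
    sq_abs]

theorem norm_add_conj_mul_div_conj_mul_norm {c d z : ℂ} {r : ℝ} (hd : d ≠ 0) (hz : ‖z‖ = r) :
    ‖z + conj c * r ^ 2 / conj d‖ * ‖d‖ = ‖c * z + d‖ * r := by
  have hzz : z * conj z = (r : ℂ) ^ 2 := by rw [mul_conj', hz]
  have key : (z + conj c * r ^ 2 / conj d) * conj d = conj ((c * z + d) * conj z) := by
    have hd' : conj d ≠ 0 := (map_ne_zero _).mpr hd
    simp only [map_mul, map_add, conj_conj]
    field_simp
    linear_combination -conj c * hzz
  rw [← norm_conj d, ← norm_mul, key, norm_conj, norm_mul, norm_conj, hz]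

theorem poissonKernel_zero_neg_conj_mul_div_conj {c d z : ℂ} {r : ℝ} (hd : d ≠ 0)
    (hr : 0 < r) (hz : ‖z‖ = r) (hcz : c * z + d ≠ 0) :
    poissonKernel 0 (-(conj c * r ^ 2 / conj d)) z
      = (‖d‖ ^ 2 - ‖c‖ ^ 2 * r ^ 2) / ‖c * z + d‖ ^ 2 := by
  have h1 := norm_add_conj_mul_div_conj_mul_norm (c := c) hd hz
  have hzw : ‖z + conj c * r ^ 2 / conj d‖ ≠ 0 := by
    intro h0
    rw [h0, zero_mul] at h1
    exact mul_ne_zero (norm_ne_zero_iff.mpr hcz) hr.ne' h1.symm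
  rw [poissonKernel_def, sub_zero, sub_zero, sub_neg_eq_add, hz, norm_neg_conj_mul_div_conj,
    div_eq_div_iff (pow_ne_zero 2 hzw) (pow_ne_zero 2 (norm_ne_zero_iff.mpr hcz))]
  field_simp
  linear_combination -(‖d‖ ^ 2 - r ^ 2 * ‖c‖ ^ 2) *
    (‖z + conj c * r ^ 2 / conj d‖ * ‖d‖ + ‖c * z + d‖ * r) * h1

theorem circleAverage_inv_norm_mul_add_sq {c d : ℂ} {r : ℝ} (hr : 0 < r) (h : ‖c‖ * r < ‖d‖) :
    circleAverage (fun z ↦ (‖c * z + d‖ ^ 2)⁻¹) 0 r = (‖d‖ ^ 2 - ‖c‖ ^ 2 * r ^ 2)⁻¹ := by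
  have hd : d ≠ 0 := norm_pos_iff.mp ((mul_nonneg (norm_nonneg c) hr.le).trans_lt h)
  have hK : 0 < ‖d‖ ^ 2 - ‖c‖ ^ 2 * r ^ 2 := by nlinarith [mul_nonneg (norm_nonneg c) hr.le]
  -- the reflection of the pole `-d / c` in the circle `‖z‖ = r`
  set w : ℂ := -(conj c * r ^ 2 / conj d)
  have hw : w ∈ ball 0 r := by
    rw [mem_ball_zero_iff, norm_neg_conj_mul_div_conj, div_lt_iff₀ (norm_pos_iff.mpr hd)]
    nlinarith
  have hP : EqOn (fun z ↦ (‖c * z + d‖ ^ 2)⁻¹)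
      (fun z ↦ (‖d‖ ^ 2 - ‖c‖ ^ 2 * r ^ 2)⁻¹ • poissonKernel 0 w z) (sphere (0 : ℂ) |r|) := by
    intro z hz
    rw [abs_of_pos hr, mem_sphere_zero_iff_norm] at hz
    have hcz := mul_add_ne_zero_of_norm_mul_lt (c := c) (d := d) (by rwa [hz])
    simp only [w, smul_eq_mul, poissonKernel_zero_neg_conj_mul_div_conj hd hr hz hcz]
    field_simp
  rw [circleAverage_congr_sphere hP, circleAverage_fun_smul, circleAverage_poissonKernel hw,
    smul_eq_mul, mul_one]

theorem Complex.polarCoord_symm_eq_circleMap (p : ℝ × ℝ) :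
    Complex.polarCoord.symm p = circleMap 0 p.1 p.2 := by
  simp [Complex.polarCoord_symm_apply, circleMap, exp_mul_I]

section PolarCoordinates

variable {E : Type*} [NormedAddCommGroup E] [NormedSpace ℝ E]

theorem integral_Ioo_circleMap_eq_circleAverage (f : ℂ → E) (c : ℂ) (R : ℝ) :
    ∫ θ in Ioo (-π) π, f (circleMap c R θ) = (2 * π) • circleAverage f c R := by
  rw [circleAverage_eq_integral_add (-π), smul_inv_smul₀ two_pi_pos.ne',
    intervalIntegral.integral_comp_add_right (fun θ ↦ f (circleMap c R θ)),
    intervalIntegral.integral_of_le (by linarith [pi_pos]), integral_Ioc_eq_integral_Ioo,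
    zero_add, two_mul, add_neg_cancel_right]

theorem setIntegral_ball_eq_integral_circleAverage {g : ℂ → E} {R : ℝ} (hR : 0 ≤ R)
    (hg : ContinuousOn g (closedBall 0 R)) :
    ∫ z in ball (0 : ℂ) R, g z = (2 * π) • ∫ r in 0..R, r • circleAverage g 0 r := by
  set T : Set (ℝ × ℝ) := Ioo 0 R ×ˢ Ioo (-π) π
  have hT : T ⊆ polarCoord.target := by
    rw [polarCoord_target]
    exact prod_mono Ioo_subset_Ioi_self subset_rfl
  have hball : ∀ p ∈ polarCoord.target,
      p.1 • (ball 0 R).indicator g (Complex.polarCoord.symm p)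
        = T.indicator (fun p ↦ p.1 • g (circleMap 0 p.1 p.2)) p := by
    rintro ⟨r, θ⟩ ⟨hr, hθ⟩
    have hnorm : ‖circleMap 0 r θ‖ = r := by rw [norm_circleMap_zero, abs_of_pos hr]
    by_cases hrR : r < R
    · rw [indicator_of_mem (by rwa [polarCoord_symm_eq_circleMap, mem_ball_zero_iff, hnorm]),
        indicator_of_mem (by exact ⟨⟨hr, hrR⟩, hθ⟩), polarCoord_symm_eq_circleMap]
    · rw [indicator_of_notMem (by rwa [polarCoord_symm_eq_circleMap, mem_ball_zero_iff, hnorm]),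
        indicator_of_notMem (fun h ↦ hrR h.1.2), smul_zero]
  have hint : IntegrableOn (fun p : ℝ × ℝ ↦ p.1 • g (circleMap 0 p.1 p.2)) T := by
    refine IntegrableOn.mono_set ?_ (prod_mono Ioo_subset_Icc_self Ioo_subset_Icc_self)
    refine ContinuousOn.integrableOn_compact (isCompact_Icc.prod isCompact_Icc) ?_
    refine continuous_fst.continuousOn.smul (hg.comp circleMap.continuous.continuousOn ?_)
    rintro ⟨r, θ⟩ ⟨hr, -⟩
    show circleMap 0 r θ ∈ closedBall 0 R
    rw [mem_closedBall_zero_iff, norm_circleMap_zero, abs_of_nonneg hr.1]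
    exact hr.2
  calc ∫ z in ball (0 : ℂ) R, g z
      = ∫ p in T, p.1 • g (circleMap 0 p.1 p.2) := by
        rw [← integral_indicator measurableSet_ball, ← Complex.integral_comp_polarCoord_symm,
          setIntegral_congr_fun polarCoord.open_target.measurableSet hball,
          setIntegral_indicator (measurableSet_Ioo.prod measurableSet_Ioo),
          inter_eq_self_of_subset_right hT]
    _ = ∫ r in Ioo 0 R, ∫ θ in Ioo (-π) π, r • g (circleMap 0 r θ) := by
        rw [Measure.volume_eq_prod, setIntegral_prod _ (by rwa [← Measure.volume_eq_prod])]
    _ = ∫ r in Ioo 0 R, (2 * π) • r • circleAverage g 0 r := by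
        refine setIntegral_congr_fun measurableSet_Ioo fun r _ ↦ ?_
        rw [integral_smul, integral_Ioo_circleMap_eq_circleAverage, smul_comm]
    _ = (2 * π) • ∫ r in 0..R, r • circleAverage g 0 r := by
        rw [integral_smul, intervalIntegral.integral_of_le hR, integral_Ioc_eq_integral_Ioo]

end PolarCoordinates

section Moebius

variable {𝕜 : Type*} [NontriviallyNormedField 𝕜] {a b c d z : 𝕜}

theorem hasDerivAt_moebius (hz : c * z + d ≠ 0) :
    HasDerivAt (fun z ↦ (a * z + b) / (c * z + d)) ((a * d - b * c) / (c * z + d) ^ 2) z := by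
  have hlin : ∀ p q : 𝕜, HasDerivAt (fun z ↦ p * z + q) p z := fun p q ↦
    ((hasDerivAt_id z).const_mul p).add_const q |>.congr_deriv (mul_one p)
  refine ((hlin a b).div (hlin c d) hz).congr_deriv ?_
  ring

theorem deriv_deriv_div_deriv_moebius (hdet : a * d - b * c ≠ 0) (hz : c * z + d ≠ 0) :
    deriv (deriv fun z ↦ (a * z + b) / (c * z + d)) z / deriv (fun z ↦ (a * z + b) / (c * z + d)) z
      = -2 * c / (c * z + d) := by
  have hderiv : deriv (fun z ↦ (a * z + b) / (c * z + d)) =ᶠ[𝓝 z]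
      fun z ↦ (a * d - b * c) / (c * z + d) ^ 2 := by
    have hcont : Continuous fun z ↦ c * z + d := by fun_prop
    filter_upwards [hcont.continuousAt.eventually_ne hz] with w hw
    exact (hasDerivAt_moebius hw).deriv
  have hsq := ((hasDerivAt_id' z).const_mul c |>.add_const d).fun_pow 2
  rw [hderiv.deriv_eq, ((hasDerivAt_const z _).fun_div hsq (pow_ne_zero 2 hz)).deriv,
    (hasDerivAt_moebius hz).deriv]
  simp only [zero_mul, zero_sub, Nat.cast_ofNat, Nat.reduceSub, pow_one, mul_one]
  field_simp

end Moebius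

theorem mul_integral_div_sub_mul_sq {A B R : ℝ} (hA : 0 < A) (hAR : 0 < A - B * R ^ 2) :
    2 * B * ∫ r in 0..R, r / (A - B * r ^ 2) = Real.log A - Real.log (A - B * R ^ 2) := by
  have hpos : ∀ r ∈ uIcc 0 R, 0 < A - B * r ^ 2 := by
    intro r hr
    have hr2 : r ^ 2 ≤ R ^ 2 := by
      rcases mem_uIcc.mp hr with h | h <;> nlinarith
    rcases le_or_gt 0 B with hB | hB <;> nlinarith
  have hF : ∀ r ∈ uIcc 0 R,
      HasDerivAt (fun r ↦ -Real.log (A - B * r ^ 2)) (2 * B * (r / (A - B * r ^ 2))) r := by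
    intro r hr
    have h := (((hasDerivAt_pow 2 r).const_mul B).const_sub A).log (hpos r hr).ne'
    refine h.fun_neg.congr_deriv ?_
    ring
  have hcont : ContinuousOn (fun r ↦ 2 * B * (r / (A - B * r ^ 2))) (uIcc 0 R) :=
    continuousOn_const.mul (continuousOn_id.div (by fun_prop) fun r hr ↦ (hpos r hr).ne')
  rw [← intervalIntegral.integral_const_mul,
    intervalIntegral.integral_eq_sub_of_hasDerivAt hF hcont.intervalIntegrable]
  simp only [ne_eq, OfNat.ofNat_ne_zero, not_false_eq_true, zero_pow, mul_zero, sub_zero]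
  ring

theorem norm_conj_mul_lt_norm_conj {a b : ℂ} {r : ℝ} (hba : ‖b‖ < ‖a‖) (hr : r ≤ 1) :
    ‖conj b‖ * r < ‖conj a‖ := by
  rw [norm_conj, norm_conj]
  exact (mul_le_of_le_one_right (norm_nonneg b) hr).trans_lt hba

theorem sq_norm_deriv_deriv_div_deriv_moebius_conj {a b z : ℂ} (hba : ‖b‖ < ‖a‖) (hz : ‖z‖ ≤ 1) :
    ‖deriv (deriv fun z ↦ (a * z + b) / (conj b * z + conj a)) z /
        deriv (fun z ↦ (a * z + b) / (conj b * z + conj a)) z‖ ^ 2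
      = 4 * ‖b‖ ^ 2 * (‖conj b * z + conj a‖ ^ 2)⁻¹ := by
  have hdet : a * conj a - b * conj b ≠ 0 := by
    rw [mul_conj', mul_conj', ← ofReal_pow, ← ofReal_pow, ← ofReal_sub, ofReal_ne_zero,
      sub_ne_zero]
    exact (pow_lt_pow_left₀ hba (norm_nonneg b) two_ne_zero).ne'
  rw [deriv_deriv_div_deriv_moebius hdet
    (mul_add_ne_zero_of_norm_mul_lt (norm_conj_mul_lt_norm_conj hba hz))]
  simp only [neg_mul, norm_div, norm_neg, norm_mul, Complex.norm_ofNat, norm_conj, div_pow]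
  ring

theorem moebius_energy (a b : ℂ) (hab : ‖a‖ ^ 2 - ‖b‖ ^ 2 = 1)
    (v : ℂ → ℂ)
    (hv : ∀ z, v z = (a * z + b) / ((starRingEnd ℂ) b * z + (starRingEnd ℂ) a)) :
    (∫ z in {z : ℂ | ‖z‖ < 1}, ‖deriv (deriv v) z / deriv v z‖ ^ 2) =
      4 * Real.pi * Real.log (‖a‖ ^ 2) := by
  have hba : ‖b‖ < ‖a‖ := by nlinarith [norm_nonneg a, norm_nonneg b]
  set g : ℂ → ℝ := fun z ↦ (‖conj b * z + conj a‖ ^ 2)⁻¹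
  have hg : ContinuousOn g (closedBall 0 1) :=
    ContinuousOn.inv₀ (by fun_prop) fun z hz ↦ pow_ne_zero 2 <| norm_ne_zero_iff.mpr <|
      mul_add_ne_zero_of_norm_mul_lt <|
        norm_conj_mul_lt_norm_conj hba (mem_closedBall_zero_iff.mp hz)
  have havg : ∀ r ∈ Ι (0 : ℝ) 1, r * circleAverage g 0 r = r / (‖a‖ ^ 2 - ‖b‖ ^ 2 * r ^ 2) := by
    intro r hr
    rw [uIoc_of_le zero_le_one] at hr
    rw [circleAverage_inv_norm_mul_add_sq hr.1 (norm_conj_mul_lt_norm_conj hba hr.2), norm_conj,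
      norm_conj, div_eq_mul_inv]
  have hball : {z : ℂ | ‖z‖ < 1} = ball 0 1 := by ext; simp
  calc _ = 4 * ‖b‖ ^ 2 * ∫ z in ball (0 : ℂ) 1, g z := by
        rw [hball, ← integral_const_mul, funext hv]
        exact setIntegral_congr_fun measurableSet_ball fun z hz ↦
          sq_norm_deriv_deriv_div_deriv_moebius_conj hba (mem_ball_zero_iff.mp hz).le
    _ = 4 * ‖b‖ ^ 2 * (2 * π * ∫ r in 0..1, r * circleAverage g 0 r) := by
        rw [setIntegral_ball_eq_integral_circleAverage zero_le_one hg]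
        simp only [smul_eq_mul]
    _ = 4 * π * (2 * ‖b‖ ^ 2 * ∫ r in 0..1, r / (‖a‖ ^ 2 - ‖b‖ ^ 2 * r ^ 2)) := by
        rw [intervalIntegral.integral_congr_ae (Eventually.of_forall havg)]
        ring
    _ = 4 * π * Real.log (‖a‖ ^ 2) := by
        rw [mul_integral_div_sub_mul_sq (by nlinarith) (by linarith), one_pow, mul_one, hab,
          Real.log_one]
        ring
end

section
/- Let φ be a circle diffeomorphism and let ψ be a circle diffeomorphism with ψ(φ(x)) = x for all x ∈ ℝ, and let u : ℝ → ℝ be smooth and 2π-periodic. Then ∫₀^{2π} u'(φ(x)) · (φ''(x)/φ'(x)) dx = − ∫₀^{2π} u'(y) · (ψ''(y)/ψ'(y)) dy. -/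
open Real intervalIntegral

lemma deriv_shift_periodic {f : ℝ → ℝ} {T c : ℝ} (h : ∀ x, f (x + T) = f x + c) (x : ℝ) :
    deriv f (x + T) = deriv f x := by
  have h1 : (fun y => f (y + T)) = fun y => f y + c := funext h
  rw [← deriv_comp_add_const f T x, h1, deriv_add_const]

theorem beta_BV_change_of_variables
    (φ ψ : ℝ → ℝ) (hφ : IsCircleDiffeo φ) (hψ : IsCircleDiffeo ψ)
    (hinv : ∀ x, ψ (φ x) = x)
    (u : ℝ → ℝ) (hu : ContDiff ℝ (⊤ : ℕ∞) u) (hup : ∀ x, u (x + 2 * Real.pi) = u x) :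
    (∫ x in (0:ℝ)..(2 * Real.pi), deriv u (φ x) * (deriv (deriv φ) x / deriv φ x)) =
      - ∫ y in (0:ℝ)..(2 * Real.pi), deriv u y * (deriv (deriv ψ) y / deriv ψ y) := by
  obtain ⟨hφs, hφp, hφd⟩ := hφ
  obtain ⟨hψs, hψp, hψd⟩ := hψ
  -- smoothness facts
  have hφ1 : Differentiable ℝ φ := hφs.differentiable (by simp)
  have hψ1 : Differentiable ℝ ψ := hψs.differentiable (by simp)
  have hu1 : Differentiable ℝ u := hu.differentiable (by simp)
  have hφd2 : ContDiff ℝ (↑(⊤:ℕ∞)) (deriv φ) :=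
    (contDiff_infty_iff_deriv.mp (hφs.of_le (by simp))).2
  have hψd2 : ContDiff ℝ (↑(⊤:ℕ∞)) (deriv ψ) :=
    (contDiff_infty_iff_deriv.mp (hψs.of_le (by simp))).2
  have h1T : (1:WithTop ℕ∞) ≤ ↑(⊤:ℕ∞) := by exact_mod_cast le_top
  have hφ2 : Differentiable ℝ (deriv φ) := hφd2.differentiable (by simp)
  have hψ2 : Differentiable ℝ (deriv ψ) := hψd2.differentiable (by simp)
  -- first derivative identity: ψ'(φ x) * φ' x = 1
  have key1 : ∀ x, deriv ψ (φ x) * deriv φ x = 1 := by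
    intro x
    have hc : HasDerivAt (fun x => ψ (φ x)) (deriv ψ (φ x) * deriv φ x) x :=
      (hψ1 (φ x)).hasDerivAt.comp x (hφ1 x).hasDerivAt
    have he : (fun x => ψ (φ x)) = id := funext hinv
    rw [he] at hc
    simpa using hc.deriv.symm.trans (deriv_id x)
  -- second derivative identity
  have key2 : ∀ x, deriv (deriv ψ) (φ x) * deriv φ x * deriv φ x
      + deriv ψ (φ x) * deriv (deriv φ) x = 0 := by
    intro x
    have hc : HasDerivAt (fun x => deriv ψ (φ x) * deriv φ x)
        (deriv (deriv ψ) (φ x) * deriv φ x * deriv φ x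
          + deriv ψ (φ x) * deriv (deriv φ) x) x :=
      (((hψ2 (φ x)).hasDerivAt.comp x (hφ1 x).hasDerivAt)).mul (hφ2 x).hasDerivAt
    have he : (fun x => deriv ψ (φ x) * deriv φ x) = fun _ => (1:ℝ) := funext key1
    rw [he] at hc
    simpa using hc.deriv.symm.trans (deriv_const x 1)
  -- pointwise identity for the integrand
  have hpt : ∀ x, deriv u (φ x) * (deriv (deriv ψ) (φ x) / deriv ψ (φ x)) * deriv φ x
      = -(deriv u (φ x) * (deriv (deriv φ) x / deriv φ x)) := by
    intro x
    have hφx := hφd x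
    have hψx : 0 < deriv ψ (φ x) := hψd (φ x)
    have k1 := key1 x
    have k2 := key2 x
    field_simp
    linear_combination (deriv u (φ x)) * k2
  -- periodicity of derivatives
  have hdu : Function.Periodic (deriv u) (2 * π) := fun x => by
    have := deriv_shift_periodic (f := u) (T := 2 * π) (c := 0) (fun x => by simp [hup x]) x
    simpa using this
  have hdψ : ∀ x, deriv ψ (x + 2 * π) = deriv ψ x :=
    deriv_shift_periodic (f := ψ) (T := 2 * π) (c := 2 * π) hψp
  have hddψ : ∀ x, deriv (deriv ψ) (x + 2 * π) = deriv (deriv ψ) x :=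
    deriv_shift_periodic (f := deriv ψ) (T := 2 * π) (c := 0) (fun x => by simp [hdψ x])
  set g : ℝ → ℝ := fun y => deriv u y * (deriv (deriv ψ) y / deriv ψ y) with hg
  have hgp : Function.Periodic g (2 * π) := fun x => by
    simp only [hg, hdu x, hdψ x, hddψ x]
  -- continuity of g
  have hgc : Continuous g := by
    apply (hu.continuous_deriv (by simp)).mul
    exact (hψd2.continuous_deriv h1T).div hψd2.continuous (fun y => (hψd y).ne')
  -- step: rewrite RHS via periodicity
  have hφ2π : φ (2 * π) = φ 0 + 2 * π := by simpa using hφp 0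
  have hper : (∫ y in (0:ℝ)..(2 * π), g y) = ∫ y in (φ 0)..(φ (2 * π)), g y := by
    rw [hφ2π]
    simpa using (hgp.intervalIntegral_add_eq 0 (φ 0))
  -- change of variables
  have hcov : (∫ x in (0:ℝ)..(2 * π), (g ∘ φ) x * deriv φ x)
      = ∫ y in (φ 0)..(φ (2 * π)), g y := by
    apply integral_comp_mul_deriv (fun x _ => (hφ1 x).hasDerivAt)
      ((hφs.continuous_deriv (by simp)).continuousOn) hgc
  rw [hper, ← hcov]
  rw [← intervalIntegral.integral_neg]
  apply intervalIntegral.integral_congr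
  intro x _
  simp only [g, Function.comp_apply]
  linarith [hpt x]
end
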